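/- arXiv:2310.18749 — 7 statements merged into one kernel-verified Lean document; each statement's English description precedes it below -/
import Mathlib

section
/- Let Γ ∈ 𝔽₂^{(2n-1)×n} satisfy: Γ_{i,j} = δ_{i,j} for 0 ≤ i ≤ n−1; Γ_{n,0} = 1; and Γ_{i+1,0} = Γ_{i,n-1}, Γ_{i+1,j} = Γ_{i,j-1} + Γ_{n,j}·Γ_{i,n-1} for j ≥ 1 and n ≤ i ≤ 2n−3. Let M⁰ be the n×n matrix with [M⁰]_{p,q} = Γ_{p+q,0}. Then the (2n−1)×n matrix M = Γ·M⁰ is Hankel in the sense that M_{i,j} = M_{i-1,j+1} for all valid indices i ≥ 1, j ≤ n−2. -/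
/-!
Row `a` of `Γ` is the coefficient vector of `X ^ a` modulo the monic polynomial `P` of degree `n`
with `X ^ n ≡ ∑ k, Γ n k • X ^ k`; so consecutive rows are related by the linear map `T` "multiply
by `X` and reduce" (for `a < n` because the first rows are the unit vectors, beyond that by the
recursions), and the rows satisfy the linear recurrence `Γ (n + d) = ∑ k, Γ n k • Γ (k + d)`.
With `L j v = ∑ k, v k * Γ (k + j) 0` we have `M a j = L j (Γ a)`, and expanding `T` together
with the recurrence at coordinate `0` gives `L j ∘ T = L (j + 1)`. Hence
`M (a + 1) j = L j (T (Γ a)) = L (j + 1) (Γ a) = M a (j + 1)`.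
-/

open Finset

section MulXReduce

variable {R : Type*} [CommSemiring R] {m : ℕ}

/-- Multiplication by `X` on coefficient vectors of polynomials of degree `≤ m`, reduced by
`X ^ (m + 1) ≡ ∑ k, c k • X ^ k`. -/
def mulXReduce (c : Fin (m + 1) → R) : (Fin (m + 1) → R) →ₗ[R] Fin (m + 1) → R where
  toFun v := Fin.cons 0 (Fin.init v) + v (Fin.last m) • c
  map_add' v w := by
    ext i; cases i using Fin.cases <;> simp [Fin.init] <;> ring
  map_smul' a v := by
    ext i; cases i using Fin.cases <;> simp [Fin.init] <;> ring

section Apply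

variable (c v : Fin (m + 1) → R)

@[simp]
lemma mulXReduce_apply_zero : mulXReduce c v 0 = v (Fin.last m) * c 0 := by
  simp [mulXReduce]

@[simp]
lemma mulXReduce_apply_succ (k : Fin m) :
    mulXReduce c v k.succ = v k.castSucc + v (Fin.last m) * c k.succ := by
  simp [mulXReduce, Fin.init]

lemma mulXReduce_single_castSucc (k : Fin m) :
    mulXReduce c (Pi.single k.castSucc 1) = Pi.single k.succ 1 := by
  ext i; cases i using Fin.cases <;> simp [Pi.single_apply, Fin.castSucc_ne_last]

lemma mulXReduce_single_last : mulXReduce c (Pi.single (Fin.last m) 1) = c := by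
  ext i; cases i using Fin.cases <;> simp [Fin.castSucc_ne_last]

lemma sum_mulXReduce_mul (w : Fin (m + 1) → R) :
    ∑ k, mulXReduce c v k * w k =
      ∑ k : Fin m, v k.castSucc * w k.succ + v (Fin.last m) * ∑ k, c k * w k := by
  simp only [Fin.sum_univ_succ (n := m), mulXReduce_apply_zero, mulXReduce_apply_succ, add_mul,
    sum_add_distrib, mul_add, mul_sum]
  ring_nf

end Apply

section PowerRows

variable (r : ℕ → Fin (m + 1) → R) (hbasis : ∀ k : Fin (m + 1), r k = Pi.single k 1)
include hbasis

lemma succ_eq_mulXReduce_of_le {a : ℕ} (ha : a ≤ m) :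
    r (a + 1) = mulXReduce (r (m + 1)) (r a) := by
  rcases ha.lt_or_eq with ha | rfl
  · have h := hbasis (Fin.castSucc ⟨a, ha⟩)
    rw [Fin.val_castSucc] at h
    rw [h, mulXReduce_single_castSucc, ← hbasis]
    rfl
  · have h := hbasis (Fin.last a)
    rw [Fin.val_last] at h
    rw [h, mulXReduce_single_last]

lemma mulXReduce_step_of_basis
    (hhigh : ∀ a, m + 1 ≤ a → a < 2 * m → r (a + 1) = mulXReduce (r (m + 1)) (r a)) :
    ∀ a < 2 * m, r (a + 1) = mulXReduce (r (m + 1)) (r a) := fun a ha =>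
  if h : a ≤ m then succ_eq_mulXReduce_of_le r hbasis h else hhigh a (by omega) ha

variable (hstep : ∀ a < 2 * m, r (a + 1) = mulXReduce (r (m + 1)) (r a))
include hstep

lemma eq_sum_smul_of_mulXReduce {d : ℕ} (hd : d < m) :
    r (m + 1 + d) = ∑ k : Fin (m + 1), r (m + 1) k • r (k + d) := by
  induction d with
  | zero => simpa [hbasis] using pi_eq_sum_univ' (r (m + 1))
  | succ d ih =>
    calc r (m + 1 + (d + 1)) = mulXReduce (r (m + 1)) (r (m + 1 + d)) :=
          hstep (m + 1 + d) (by omega)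
      _ = ∑ k : Fin (m + 1), r (m + 1) k • r (k + d + 1) := by
        rw [ih (by omega), map_sum]
        refine sum_congr rfl fun k _ => ?_
        rw [map_smul, hstep (k + d) (by omega)]

lemma sum_mulXReduce_mul_shift {j : ℕ} (hj : j < m) (v : Fin (m + 1) → R) :
    ∑ k, mulXReduce (r (m + 1)) v k * r (k + j) 0 = ∑ k, v k * r (k + (j + 1)) 0 := by
  have hrec := congrFun (eq_sum_smul_of_mulXReduce r hbasis hstep hj) 0
  simp only [Finset.sum_apply, Pi.smul_apply, smul_eq_mul] at hrec
  rw [sum_mulXReduce_mul, ← hrec, Fin.sum_univ_castSucc]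
  simp only [Fin.val_succ, Fin.val_castSucc, Fin.val_last, add_right_comm _ 1, add_assoc]

lemma sum_mul_eq_sum_mul_of_mulXReduce {a j : ℕ} (ha : a < 2 * m) (hj : j < m) :
    ∑ k, r (a + 1) k * r (k + j) 0 = ∑ k, r a k * r (k + (j + 1)) 0 := by
  rw [hstep a ha, sum_mulXReduce_mul_shift r hbasis hstep hj]

end PowerRows

end MulXReduce

section RowOf

variable {R : Type*} {N : ℕ}

/-- The rows of `Γ`, indexed by `ℕ` (junk value `0` past the last row). -/
def rowOf [Zero R] {n : ℕ} (Γ : Matrix (Fin N) (Fin n) R) (a : ℕ) : Fin n → R :=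
  if h : a < N then Γ ⟨a, h⟩ else 0

lemma rowOf_of_lt [Zero R] {n : ℕ} (Γ : Matrix (Fin N) (Fin n) R) {a : ℕ} (h : a < N) : rowOf Γ a = Γ ⟨a, h⟩ :=
  dif_pos h

lemma mul_of_add_apply [NonUnitalNonAssocSemiring R] {m : ℕ} (Γ : Matrix (Fin N) (Fin (m + 1)) R)
    (hN : 2 * m < N) (a : Fin N) (c : Fin (m + 1)) :
    (Γ * Matrix.of fun p q : Fin (m + 1) => Γ ⟨(p : ℕ) + (q : ℕ), by omega⟩ ⟨0, by omega⟩) a c =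
      ∑ k, rowOf Γ a k * rowOf Γ (k + c) 0 := by
  rw [Matrix.mul_apply]
  refine sum_congr rfl fun k _ => ?_
  rw [Matrix.of_apply, rowOf_of_lt Γ a.isLt, rowOf_of_lt Γ (by omega)]
  rfl

end RowOf

/-- let `Γ ∈ 𝔽₂^{(2n-1)×n}` satisfy `Γ_{i,j} = δ_{i,j}` for `i ≤ n−1`,
`Γ_{n,0} = 1`, and the recursions `Γ_{i+1,0} = Γ_{i,n-1}`,
`Γ_{i+1,j} = Γ_{i,j-1} + Γ_{n,j}·Γ_{i,n-1}` (for `j ≥ 1`, `n ≤ i ≤ 2n−3`).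
With `[M⁰]_{p,q} = Γ_{p+q,0}`, the matrix `M = Γ·M⁰` is Hankel:
`M_{i,j} = M_{i-1,j+1}` for all valid indices. -/
theorem stmt9 (n : ℕ) (hn : 2 ≤ n)
    (Γ : Matrix (Fin (2 * n - 1)) (Fin n) (ZMod 2))
    (h1 : ∀ i j : Fin n,
      Γ ⟨(i : ℕ), by have := i.isLt; omega⟩ j = if (i : ℕ) = (j : ℕ) then 1 else 0)
    (h2 : Γ ⟨n, by omega⟩ ⟨0, by omega⟩ = 1)
    (h3 : ∀ i : ℕ, ∀ _ : n ≤ i, ∀ _ : i ≤ 2 * n - 3,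
      Γ ⟨i + 1, by omega⟩ ⟨0, by omega⟩ = Γ ⟨i, by omega⟩ ⟨n - 1, by omega⟩)
    (h4 : ∀ i : ℕ, ∀ _ : n ≤ i, ∀ _ : i ≤ 2 * n - 3, ∀ j : Fin n, ∀ _ : 1 ≤ (j : ℕ),
      Γ ⟨i + 1, by omega⟩ j =
        Γ ⟨i, by omega⟩ ⟨(j : ℕ) - 1, by have := j.isLt; omega⟩ +
          Γ ⟨n, by omega⟩ j * Γ ⟨i, by omega⟩ ⟨n - 1, by omega⟩) :
    ∀ (i : Fin (2 * n - 1)) (j : Fin n), ∀ _ : 1 ≤ (i : ℕ), ∀ _ : (j : ℕ) ≤ n - 2,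
      (Γ * Matrix.of fun p q : Fin n =>
          Γ ⟨(p : ℕ) + (q : ℕ), by have := p.isLt; have := q.isLt; omega⟩ ⟨0, by omega⟩) i j
        = (Γ * Matrix.of fun p q : Fin n =>
            Γ ⟨(p : ℕ) + (q : ℕ), by have := p.isLt; have := q.isLt; omega⟩ ⟨0, by omega⟩)
            ⟨(i : ℕ) - 1, by have := i.isLt; omega⟩ ⟨(j : ℕ) + 1, by have := j.isLt; omega⟩ := by
  intro i j hi hj
  obtain ⟨m, rfl⟩ : ∃ m, n = m + 1 := ⟨n - 1, by omega⟩
  have hbasis (k : Fin (m + 1)) : rowOf Γ k = Pi.single k 1 := by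
    funext l
    rw [rowOf_of_lt Γ (by omega), h1, Pi.single_apply]
    simp [Fin.ext_iff, eq_comm]
  have hhigh (a : ℕ) (ha : m + 1 ≤ a) (ha' : a < 2 * m) :
      rowOf Γ (a + 1) = mulXReduce (rowOf Γ (m + 1)) (rowOf Γ a) := by
    have hlast : Fin.last m = ⟨m + 1 - 1, by omega⟩ := by ext; simp
    funext l
    rw [rowOf_of_lt Γ (a := a) (by omega), rowOf_of_lt Γ (a := a + 1) (by omega),
      rowOf_of_lt Γ (a := m + 1) (by omega)]
    cases l using Fin.cases with
    | zero =>
      rw [mulXReduce_apply_zero, hlast, show Γ ⟨m + 1, _⟩ 0 = 1 from h2, mul_one]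
      exact h3 a ha (by omega)
    | succ l =>
      have hprev : l.castSucc = ⟨l.succ - 1, by omega⟩ := by ext; simp
      rw [mulXReduce_apply_succ, hlast, hprev, h4 a ha (by omega) l.succ (by simp)]
      ring
  obtain ⟨_ | a, ha⟩ := i
  · exact absurd hi (by simp)
  simp only [Nat.add_sub_cancel]
  rw [mul_of_add_apply Γ (by omega), mul_of_add_apply Γ (by omega)]
  exact sum_mul_eq_sum_mul_of_mulXReduce (rowOf Γ) hbasis
    (mulXReduce_step_of_basis (rowOf Γ) hbasis hhigh) (by omega) (by omega)
end

section
/- Let {|Φ_{U,b}⟩} for U in an index set of size 2^n+1 and b ∈ {0,1}^n be a full set of mutually unbiased bases of ℂ^{2^n}: each {|Φ_{U,b}⟩}_b is orthonormal, and |⟨Φ_{U,b}|Φ_{U',b'}⟩|² = 2^{-n} whenever U ≠ U'. Fix one basis indexed by U₀ and let O_F = Σ_{b≠b'} O_{b,b'} |Φ_{U₀,b}⟩⟨Φ_{U₀,b'}| be Hermitian with zero diagonal in that basis. Then for every density matrix ρ, (2^n+1) Σ_{U,b} tr(O_F Φ_{U,b})² tr(ρ Φ_{U,b}) ≤ ((2^n+1)/2^n)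 · (Σ_{b≠b'} |O_{b,b'}|)². -/
open Matrix Finset
open scoped ComplexOrder

noncomputable section

/-- Bit strings of length `n`, indexing the computational basis of `n` qubits. -/
abbrev Bits (n : ℕ) := Fin n → Fin 2

lemma trace_mul_vecMulVec {m : Type*} [Fintype m] (A : Matrix m m ℂ) (x y : m → ℂ) :
    (A * Matrix.vecMulVec x y).trace = y ⬝ᵥ (A *ᵥ x) := by
  simp [Matrix.trace, Matrix.diag, Matrix.mul_apply, Matrix.vecMulVec_apply,
    dotProduct, Matrix.mulVec, Finset.mul_sum]
  congr 1; ext i; congr 1; ext j; ring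

lemma gram {m ι : Type*} [Fintype m] [DecidableEq m] (v : ι → m → (m → ℂ)) (u : ι)
    (horth : ∀ (b b' : m), (star ∘ v u b) ⬝ᵥ v u b' = if b = b' then 1 else 0) :
    ∑ b : m, Matrix.vecMulVec (v u b) (star ∘ v u b) = 1 := by
  let V : Matrix m m ℂ := Matrix.of fun i b => v u b i
  have h1 : Vᴴ * V = 1 := by
    ext b b'
    simpa [Matrix.mul_apply, Matrix.conjTranspose_apply, Matrix.one_apply, V,
      dotProduct] using horth b b'
  have h2 : V * Vᴴ = 1 := mul_eq_one_comm.mp h1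
  ext i j
  have := congrFun (congrFun h2 i) j
  simpa [Matrix.mul_apply, Matrix.conjTranspose_apply, V, Matrix.vecMulVec_apply,
    Matrix.sum_apply] using this

lemma vmv_mulVec {m : Type*} [Fintype m] (a z x : m → ℂ) :
    Matrix.vecMulVec a z *ᵥ x = (z ⬝ᵥ x) • a := by
  ext i
  simp only [Matrix.mulVec, dotProduct, Matrix.vecMulVec_apply, Pi.smul_apply,
    smul_eq_mul, mul_assoc]
  rw [← Finset.mul_sum]; ring

lemma key_term {m : Type*} [Fintype m] (a z x y : m → ℂ) (c : ℂ) :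
    ((c • Matrix.vecMulVec a z) * Matrix.vecMulVec x y).trace
      = c * (z ⬝ᵥ x) * (y ⬝ᵥ a) := by
  rw [smul_mul_assoc, Matrix.trace_smul, trace_mul_vecMulVec, vmv_mulVec]
  simp [dotProduct_smul]; ring

/-- for a full set of `2^n+1` mutually unbiased bases `{|Φ_{U,b}⟩}` of
`ℂ^{2^n}`, and a Hermitian observable `O_F` that is off-diagonal in a fixed basis `U₀`,
the shadow second moment is bounded by the `l₁`-norm of coherence:
`(2^n+1) Σ_{U,b} tr(O_F Φ_{U,b})² tr(ρ Φ_{U,b}) ≤ ((2^n+1)/2^n) (Σ_{b≠b'} |O_{b,b'}|)²`. -/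
theorem stmt10 (n : ℕ) (ι : Type) [Fintype ι] (hι : Fintype.card ι = 2 ^ n + 1)
    (v : ι → Bits n → (Bits n → ℂ))
    (horth : ∀ u (b b' : Bits n),
      (star ∘ v u b) ⬝ᵥ v u b' = if b = b' then 1 else 0)
    (hmub : ∀ u u' : ι, u ≠ u' → ∀ b b' : Bits n,
      ‖(star ∘ v u b) ⬝ᵥ v u' b'‖ ^ 2 = ((2 : ℝ) ^ n)⁻¹)
    (u₀ : ι) (O : Bits n → Bits n → ℂ)
    (hOH : ∀ b b', O b b' = star (O b' b))
    (OF : Matrix (Bits n) (Bits n) ℂ)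
    (hOF : OF = ∑ b : Bits n, ∑ b' : Bits n,
      if b ≠ b' then O b b' • Matrix.vecMulVec (v u₀ b) (star ∘ v u₀ b') else 0)
    (ρ : Matrix (Bits n) (Bits n) ℂ) (hρ : ρ.PosSemidef) (hρtr : ρ.trace = 1) :
    ((2 : ℝ) ^ n + 1) * ∑ u : ι, ∑ b : Bits n,
        ((Matrix.trace (OF * Matrix.vecMulVec (v u b) (star ∘ v u b))).re) ^ 2 *
          (Matrix.trace (ρ * Matrix.vecMulVec (v u b) (star ∘ v u b))).re
      ≤ (((2 : ℝ) ^ n + 1) / (2 : ℝ) ^ n) *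
          (∑ b : Bits n, ∑ b' : Bits n, if b ≠ b' then ‖O b b'‖ else 0) ^ 2 := by
  classical
  set C : ℝ := ∑ b : Bits n, ∑ b' : Bits n, if b ≠ b' then ‖O b b'‖ else 0 with hC
  have hC0 : 0 ≤ C := by
    apply Finset.sum_nonneg; intro b _; apply Finset.sum_nonneg; intro b' _
    split <;> positivity
  have h2n : (0:ℝ) < (2:ℝ) ^ n := by positivity
  -- trace formula
  have hT : ∀ u b, Matrix.trace (OF * Matrix.vecMulVec (v u b) (star ∘ v u b)) =
      ∑ b₁ : Bits n, ∑ b₂ : Bits n, if b₁ ≠ b₂ then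
        O b₁ b₂ * ((star ∘ v u₀ b₂) ⬝ᵥ v u b) * ((star ∘ v u b) ⬝ᵥ v u₀ b₁) else 0 := by
    intro u b
    rw [hOF]
    simp only [Finset.sum_mul, Matrix.trace_sum, ite_mul, zero_mul,
      apply_ite Matrix.trace, Matrix.trace_zero, key_term]
  -- trace at u₀ vanishes
  have hT0 : ∀ b, Matrix.trace (OF * Matrix.vecMulVec (v u₀ b) (star ∘ v u₀ b)) = 0 := by
    intro b
    rw [hT u₀ b]
    apply Finset.sum_eq_zero; intro b₁ _
    apply Finset.sum_eq_zero; intro b₂ _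
    rw [horth, horth]
    by_cases h12 : b₁ ≠ b₂
    · rw [if_pos h12]
      by_cases hb2 : b₂ = b
      · rw [if_pos hb2, if_neg (fun hb1 => h12 (hb1.symm.trans hb2.symm))]; ring
      · rw [if_neg hb2]; ring
    · rw [if_neg h12]
  -- bound on trace for u ≠ u₀
  have habs : ∀ u, u ≠ u₀ → ∀ b,
      |(Matrix.trace (OF * Matrix.vecMulVec (v u b) (star ∘ v u b))).re| ≤ C / 2 ^ n := by
    intro u hu b
    rw [hT u b]
    refine le_trans (Complex.abs_re_le_norm _) ?_
    refine le_trans (norm_sum_le _ _) ?_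
    have hterm : ∀ b₁ b₂ : Bits n, b₁ ≠ b₂ →
        ‖O b₁ b₂ * ((star ∘ v u₀ b₂) ⬝ᵥ v u b) * ((star ∘ v u b) ⬝ᵥ v u₀ b₁)‖
          = ‖O b₁ b₂‖ * ((2:ℝ) ^ n)⁻¹ := by
      intro b₁ b₂ _
      have h1 : ‖(star ∘ v u₀ b₂) ⬝ᵥ v u b‖ = Real.sqrt (((2:ℝ)^n)⁻¹) := by
        rw [← hmub u₀ u (Ne.symm hu) b₂ b, Real.sqrt_sq (norm_nonneg _)]
      have h2 : ‖(star ∘ v u b) ⬝ᵥ v u₀ b₁‖ = Real.sqrt (((2:ℝ)^n)⁻¹) := by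
        rw [← hmub u u₀ hu b b₁, Real.sqrt_sq (norm_nonneg _)]
      rw [norm_mul, norm_mul, h1, h2, mul_assoc, Real.mul_self_sqrt (by positivity)]
    calc ∑ b₁ : Bits n, ‖∑ b₂ : Bits n, if b₁ ≠ b₂ then
            O b₁ b₂ * ((star ∘ v u₀ b₂) ⬝ᵥ v u b) * ((star ∘ v u b) ⬝ᵥ v u₀ b₁) else 0‖
        ≤ ∑ b₁ : Bits n, ∑ b₂ : Bits n, if b₁ ≠ b₂ then
            ‖O b₁ b₂‖ * ((2:ℝ) ^ n)⁻¹ else 0 := by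
          apply Finset.sum_le_sum; intro b₁ _
          refine le_trans (norm_sum_le _ _) ?_
          apply Finset.sum_le_sum; intro b₂ _
          split_ifs with h
          · exact le_of_eq (hterm b₁ b₂ h)
          · simp
      _ = C / 2 ^ n := by
          rw [hC, div_eq_mul_inv, Finset.sum_mul]
          congr 1; ext b₁; rw [Finset.sum_mul]
          congr 1; ext b₂; split_ifs <;> simp
  -- probability facts
  have hp0 : ∀ u b, 0 ≤ (Matrix.trace (ρ * Matrix.vecMulVec (v u b) (star ∘ v u b))).re := by
    intro u b
    rw [trace_mul_vecMulVec]
    have := hρ.dotProduct_mulVec_nonneg (v u b)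
    have : 0 ≤ (star (v u b)) ⬝ᵥ (ρ *ᵥ v u b) := this
    exact (Complex.le_def.mp this).1
  have hpsum : ∀ u, ∑ b : Bits n,
      (Matrix.trace (ρ * Matrix.vecMulVec (v u b) (star ∘ v u b))).re = 1 := by
    intro u
    have h : ∑ b : Bits n, Matrix.trace (ρ * Matrix.vecMulVec (v u b) (star ∘ v u b)) = 1 := by
      rw [← Matrix.trace_sum, ← Finset.mul_sum, gram v u (horth u), mul_one, hρtr]
    have := congrArg Complex.re h
    simpa [Complex.re_sum] using this
  -- main sum bound
  have key : ∑ u : ι, ∑ b : Bits n,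
      ((Matrix.trace (OF * Matrix.vecMulVec (v u b) (star ∘ v u b))).re) ^ 2 *
        (Matrix.trace (ρ * Matrix.vecMulVec (v u b) (star ∘ v u b))).re
      ≤ (2:ℝ) ^ n * (C / 2 ^ n) ^ 2 := by
    rw [← Finset.sum_erase_add _ _ (Finset.mem_univ u₀)]
    have h0 : ∑ b : Bits n,
        ((Matrix.trace (OF * Matrix.vecMulVec (v u₀ b) (star ∘ v u₀ b))).re) ^ 2 *
          (Matrix.trace (ρ * Matrix.vecMulVec (v u₀ b) (star ∘ v u₀ b))).re = 0 := by
      apply Finset.sum_eq_zero; intro b _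
      rw [hT0 b]; simp
    rw [h0, add_zero]
    have hcard : ((Finset.univ : Finset ι).erase u₀).card = 2 ^ n := by
      rw [Finset.card_erase_of_mem (Finset.mem_univ u₀), Finset.card_univ, hι]
      simp
    calc ∑ u ∈ Finset.univ.erase u₀, ∑ b : Bits n,
          ((Matrix.trace (OF * Matrix.vecMulVec (v u b) (star ∘ v u b))).re) ^ 2 *
            (Matrix.trace (ρ * Matrix.vecMulVec (v u b) (star ∘ v u b))).re
        ≤ ∑ u ∈ Finset.univ.erase u₀, ∑ b : Bits n, (C / 2 ^ n) ^ 2 *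
            (Matrix.trace (ρ * Matrix.vecMulVec (v u b) (star ∘ v u b))).re := by
          apply Finset.sum_le_sum; intro u hu
          apply Finset.sum_le_sum; intro b _
          have hne : u ≠ u₀ := Finset.ne_of_mem_erase hu
          refine mul_le_mul_of_nonneg_right ?_ (hp0 u b)
          have h := habs u hne b
          have := abs_le.mp h
          nlinarith [this.1, this.2]
      _ = ∑ u ∈ Finset.univ.erase u₀, (C / 2 ^ n) ^ 2 := by
          apply Finset.sum_congr rfl; intro u _
          rw [← Finset.mul_sum, hpsum u, mul_one]
      _ = (2:ℝ) ^ n * (C / 2 ^ n) ^ 2 := by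
          rw [Finset.sum_const, hcard, nsmul_eq_mul]; push_cast; ring
  refine le_trans (mul_le_mul_of_nonneg_left key (by positivity)) (le_of_eq ?_)
  field_simp
end
end

section
/- Let {U} index a full set of MUBs of ℂ^{2^n} whose bases are stabilizer bases covering every nontrivial n-qubit Pauli exactly once, and let O_0 be traceless Hermitian. Then Σ_U max_b |tr(O_0 Φ_{U,b})| ≤ 2^{-n} Σ_{P ∈ P*_n} |tr(P O_0)| = D(O_0), where P*_n is the set of 4^n − 1 nontrivial n-qubit Pauli operators and D is the stabilizer norm. -/
open Matrix Finset

noncomputable section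

/-- The four single-qubit Pauli matrices `I, X, Y, Z`. -/
def P1 : Fin 4 → Matrix (Fin 2) (Fin 2) ℂ :=
  ![!![1, 0; 0, 1], !![0, 1; 1, 0], !![0, -Complex.I; Complex.I, 0], !![1, 0; 0, -1]]

/-- The `n`-qubit Pauli string `⊗_k P1 (a k)`. -/
def PString (n : ℕ) (a : Fin n → Fin 4) : Matrix (Bits n) (Bits n) ℂ :=
  Matrix.of fun x y => ∏ k, P1 (a k) (x k) (y k)

/-- for a full set of stabilizer MUBs, whose stabilizer operators
`S_{U,m}` cover each nontrivial `n`-qubit Pauli exactly once (up to sign), and whose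
projectors satisfy `Φ_{U,b} = 2^{-n} Σ_m (-1)^{b·m} S_{U,m}`, the optimal-sampling
weight of any traceless Hermitian `O₀` is bounded by the stabilizer norm:
`Σ_U max_b |tr(O₀ Φ_{U,b})| ≤ 2^{-n} Σ_{P ∈ P*_n} |tr(P O₀)| = D(O₀)`. -/
theorem stmt13 (n : ℕ) (ι : Type) [Fintype ι] (hι : Fintype.card ι = 2 ^ n + 1)
    (S : ι → Bits n → Matrix (Bits n) (Bits n) ℂ)
    (hS0 : ∀ u, S u (fun _ => 0) = 1)
    (hSP : ∀ u, ∀ m : Bits n, m ≠ (fun _ => 0) →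
      ∃ a : Fin n → Fin 4, a ≠ (fun _ => 0) ∧
        (S u m = PString n a ∨ S u m = -(PString n a)))
    (hcover : ∀ a : Fin n → Fin 4, a ≠ (fun _ => 0) →
      ∃! q : ι × Bits n, q.2 ≠ (fun _ => 0) ∧
        (S q.1 q.2 = PString n a ∨ S q.1 q.2 = -(PString n a)))
    (O₀ : Matrix (Bits n) (Bits n) ℂ) (hO : O₀.IsHermitian) (htr : O₀.trace = 0)
    (Φ : ι → Bits n → Matrix (Bits n) (Bits n) ℂ)
    (hΦ : ∀ u b, Φ u b = ((2 : ℂ) ^ n)⁻¹ •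
      ∑ m : Bits n, ((-1 : ℂ)) ^ (∑ i, (b i : ℕ) * (m i : ℕ)) • S u m) :
    ∑ u : ι, (Finset.univ.sup' Finset.univ_nonempty
        fun b : Bits n => ‖Matrix.trace (O₀ * Φ u b)‖)
      ≤ ((2 : ℝ) ^ n)⁻¹ *
        ∑ a ∈ Finset.univ.filter (fun a : Fin n → Fin 4 => a ≠ fun _ => 0),
          ‖Matrix.trace (PString n a * O₀)‖ := by
  classical
  -- abbreviations
  have habs1 : ‖((2:ℂ)^n)⁻¹‖ = ((2:ℝ)^n)⁻¹ := by
    simp [map_inv₀, map_pow]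
  -- per-(u,b) bound
  have key : ∀ (u : ι) (b : Bits n), ‖(O₀ * Φ u b).trace‖
      ≤ ((2:ℝ)^n)⁻¹ * ∑ m ∈ Finset.univ.erase (fun _ => 0 : Bits n),
          ‖(O₀ * S u m).trace‖ := by
    intro u b
    have h1 : (O₀ * Φ u b).trace
        = ((2:ℂ)^n)⁻¹ * ∑ m : Bits n,
            ((-1:ℂ))^(∑ i, (b i : ℕ) * (m i : ℕ)) * (O₀ * S u m).trace := by
      rw [hΦ]
      simp [Matrix.mul_smul, Matrix.mul_sum, Matrix.trace_sum, smul_eq_mul, Finset.mul_sum]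
    have h2 : ∑ m : Bits n, ((-1:ℂ))^(∑ i, (b i : ℕ) * (m i : ℕ)) * (O₀ * S u m).trace
        = ∑ m ∈ Finset.univ.erase (fun _ => 0 : Bits n),
            ((-1:ℂ))^(∑ i, (b i : ℕ) * (m i : ℕ)) * (O₀ * S u m).trace := by
      rw [← Finset.add_sum_erase _ _ (Finset.mem_univ (fun _ => 0 : Bits n))]
      have hz : (O₀ * S u (fun _ => 0)).trace = 0 := by
        rw [hS0 u]; simpa using htr
      simp [hz]
    rw [h1, h2, norm_mul, habs1]
    refine mul_le_mul_of_nonneg_left ?_ (by positivity)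
    refine le_trans (norm_sum_le _ _) (Finset.sum_le_sum fun m _ => ?_)
    rw [norm_mul]
    simp [map_pow]
  -- choose Pauli labels
  choose! g hg1 hg2 using hSP
  set G : ι × Bits n → (Fin n → Fin 4) := fun q => g q.1 q.2 with hG
  set Q : Finset (ι × Bits n) :=
    Finset.univ.filter (fun q : ι × Bits n => q.2 ≠ fun _ => 0) with hQ
  set A : Finset (Fin n → Fin 4) :=
    Finset.univ.filter (fun a : Fin n → Fin 4 => a ≠ fun _ => 0) with hA
  have hmemQ : ∀ q : ι × Bits n, q ∈ Q ↔ q.2 ≠ (fun _ => 0) := by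
    intro q; simp [hQ]
  have hmemA : ∀ a : Fin n → Fin 4, a ∈ A ↔ a ≠ (fun _ => 0) := by
    intro a; simp [hA]
  -- injectivity of G on Q
  have hinj : ∀ q1 ∈ Q, ∀ q2 ∈ Q, G q1 = G q2 → q1 = q2 := by
    intro q1 hq1 q2 hq2 heq
    rw [hmemQ] at hq1 hq2
    obtain ⟨q, _, huniq⟩ := hcover (G q1) (hg1 q1.1 q1.2 hq1)
    have e1 : q1 = q := huniq q1 ⟨hq1, hg2 q1.1 q1.2 hq1⟩
    have e2 : q2 = q := huniq q2 ⟨hq2, by rw [heq] at *; exact hg2 q2.1 q2.2 hq2⟩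
    rw [e1, e2]
  -- cardinalities
  have hcardB : Fintype.card (Bits n) = 2 ^ n := by
    simp [Bits]
  have hcardP : Fintype.card (Fin n → Fin 4) = 4 ^ n := by
    simp
  have hQprod : Q = (Finset.univ : Finset ι) ×ˢ
      ((Finset.univ : Finset (Bits n)).erase (fun _ => 0)) := by
    ext q
    simp [hQ, Finset.mem_product]
  have hQcard : Q.card = (2 ^ n + 1) * (2 ^ n - 1) := by
    rw [hQprod, Finset.card_product, Finset.card_univ, hι,
      Finset.card_erase_of_mem (Finset.mem_univ _), Finset.card_univ, hcardB]
  have hAcard : A.card = 4 ^ n - 1 := by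
    rw [hA, Finset.filter_ne' , Finset.card_erase_of_mem (Finset.mem_univ _),
      Finset.card_univ, hcardP]
  have hnum : (2 ^ n + 1) * (2 ^ n - 1) = 4 ^ n - 1 := by
    have h1 : 1 ≤ (2:ℕ)^n := Nat.one_le_two_pow
    have h4 : (4:ℕ)^n = 2^n * 2^n := by
      rw [show (4:ℕ) = 2*2 from rfl, mul_pow]
    obtain ⟨y, hy⟩ := Nat.exists_eq_add_of_le h1
    rw [h4, hy]
    have e1 : 1 + y - 1 = y := by omega
    have e2 : (1+y)*(1+y) = (1+y+1)*y + 1 := by ring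
    rw [e1, e2]
    simp
  -- image of Q under G is A
  have himg : Q.image G = A := by
    apply Finset.eq_of_subset_of_card_le
    · intro a ha
      obtain ⟨q, hq, rfl⟩ := Finset.mem_image.mp ha
      rw [hmemA]
      exact hg1 q.1 q.2 ((hmemQ q).mp hq)
    · rw [Finset.card_image_of_injOn (fun x hx y hy h => hinj x hx y hy h),
        hQcard, hAcard, hnum]
  -- sum identification
  have hsum : ∑ u : ι, ∑ m ∈ Finset.univ.erase (fun _ => 0 : Bits n),
        ‖(O₀ * S u m).trace‖
      = ∑ a ∈ A, ‖(PString n a * O₀).trace‖ := by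
    rw [← himg, Finset.sum_image (fun x hx y hy h => hinj x hx y hy h)]
    rw [hQprod, Finset.sum_product]
    refine Finset.sum_congr rfl fun u _ => Finset.sum_congr rfl fun m hm => ?_
    have hm' : m ≠ (fun _ => 0) := Finset.ne_of_mem_erase hm
    rcases hg2 u m hm' with h | h
    · rw [Matrix.trace_mul_comm, ← h]
    · have : PString n (G (u, m)) = -(S u m) := by
        rw [h]; simp [hG]
      rw [this]
      simp [Matrix.trace_mul_comm O₀ (S u m)]
  -- final assembly
  calc ∑ u : ι, (Finset.univ.sup' Finset.univ_nonempty
        fun b : Bits n => ‖Matrix.trace (O₀ * Φ u b)‖)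
      ≤ ∑ u : ι, ((2:ℝ)^n)⁻¹ * ∑ m ∈ Finset.univ.erase (fun _ => 0 : Bits n),
          ‖(O₀ * S u m).trace‖ :=
        Finset.sum_le_sum fun u _ => Finset.sup'_le _ _ fun b _ => key u b
    _ = ((2:ℝ)^n)⁻¹ * ∑ u : ι, ∑ m ∈ Finset.univ.erase (fun _ => 0 : Bits n),
          ‖(O₀ * S u m).trace‖ := by rw [Finset.mul_sum]
    _ = ((2:ℝ)^n)⁻¹ * ∑ a ∈ A, ‖(PString n a * O₀).trace‖ := by rw [hsum]
end
end

section
/- Let V be an n-qubit Clifford unitary and O = V†|0⟩⟨0|V. For a full set of stabilizer MUBs {U} of ℂ^{2^n} covering each nontrivial Pauli exactly once, the coefficients α_{U,b} = |⟨b|U V†|0⟩|² satisfy Σ_U max_b α_{U,b} = 2. -/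
open Matrix Finset

noncomputable section

/-- The single-qubit Pauli-Z matrix. -/
def PZ : Matrix (Fin 2) (Fin 2) ℂ := !![1, 0; 0, -1]

/-- The tensor product `Z_m = ⊗_i Z^{m_i}`. -/
def Zm (n : ℕ) (m : Bits n) : Matrix (Bits n) (Bits n) ℂ :=
  Matrix.of fun x y => ∏ k, (PZ ^ (m k : ℕ)) (x k) (y k)

/-- A unitary is Clifford if conjugation sends every Pauli string to a phase
(`±1, ±i`) times a Pauli string. -/
def IsClifford (n : ℕ) (U : Matrix (Bits n) (Bits n) ℂ) : Prop :=
  ∀ a : Fin n → Fin 4, ∃ c ∈ ({1, -1, Complex.I, -Complex.I} : Set ℂ),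
    ∃ a' : Fin n → Fin 4, Uᴴ * PString n a * U = c • PString n a'


namespace S14
variable {n : ℕ}

/-! ### Tensor-product matrices -/

def tens (n : ℕ) (M : Fin n → Matrix (Fin 2) (Fin 2) ℂ) : Matrix (Bits n) (Bits n) ℂ :=
  Matrix.of fun x y => ∏ k, M k (x k) (y k)

lemma tens_mul (M N : Fin n → Matrix (Fin 2) (Fin 2) ℂ) :
    tens n M * tens n N = tens n (fun k => M k * N k) := by
  ext x y
  simp only [tens, Matrix.mul_apply, Matrix.of_apply]
  have : (∑ w : Bits n, (∏ k, M k (x k) (w k)) * ∏ k, N k (w k) (y k))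
      = ∑ w : Bits n, ∏ k, (M k (x k) (w k) * N k (w k) (y k)) :=
    Finset.sum_congr rfl fun w _ => (Finset.prod_mul_distrib).symm
  rw [this, ← Fintype.piFinset_univ]
  exact (Finset.prod_univ_sum (fun _ : Fin n => (univ : Finset (Fin 2)))
    (fun k j => M k (x k) j * N k j (y k))).symm

lemma tens_one : tens n (fun _ => 1) = 1 := by
  ext x y
  simp only [tens, Matrix.of_apply, Matrix.one_apply]
  by_cases h : x = y
  · subst h; simp
  · obtain ⟨k, hk⟩ := Function.ne_iff.mp h
    rw [if_neg h]
    exact Finset.prod_eq_zero (mem_univ k) (by simp [Matrix.one_apply, hk])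

lemma tens_conjTranspose (M : Fin n → Matrix (Fin 2) (Fin 2) ℂ) :
    (tens n M)ᴴ = tens n (fun k => (M k)ᴴ) := by
  ext x y
  simp [tens, Matrix.conjTranspose_apply, map_prod]

lemma trace_tens (M : Fin n → Matrix (Fin 2) (Fin 2) ℂ) :
    Matrix.trace (tens n M) = ∏ k, Matrix.trace (M k) := by
  simp only [Matrix.trace, Matrix.diag, tens, Matrix.of_apply]
  rw [← Fintype.piFinset_univ]
  exact (Finset.prod_univ_sum (fun _ : Fin n => (univ : Finset (Fin 2)))
    (fun k j => M k j j)).symm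

/-! ### Single-qubit Pauli facts -/

lemma P1_mul_self (i : Fin 4) : P1 i * P1 i = 1 := by
  fin_cases i <;>
    · ext x y
      fin_cases x <;> fin_cases y <;>
        simp [P1, Matrix.mul_apply, Fin.sum_univ_two, Matrix.one_apply]

lemma P1_conjT (i : Fin 4) : (P1 i)ᴴ = P1 i := by
  fin_cases i <;>
    · ext x y; fin_cases x <;> fin_cases y <;> simp [P1, Matrix.conjTranspose_apply]

lemma trace_P1_mul_conj (i j : Fin 4) :
    Matrix.trace (P1 i * (P1 j)ᴴ) = if i = j then 2 else 0 := by
  rw [P1_conjT]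
  fin_cases i <;> fin_cases j <;>
    simp [P1, Matrix.trace_fin_two, Matrix.mul_apply, Fin.sum_univ_two] <;> ring_nf <;>
      simp [Complex.I_sq]

lemma P1_zero : P1 0 = 1 := by
  ext x y; fin_cases x <;> fin_cases y <;> simp [P1, Matrix.one_apply]

lemma P1_three : P1 3 = PZ := rfl

lemma PZ_pow_fin (j : Fin 2) : PZ ^ (j : ℕ) = P1 (if j = 0 then 0 else 3) := by
  fin_cases j
  · simp [P1_zero]
  · simp [pow_one, P1_three]

/-! ### Pauli strings -/

lemma PString_eq_tens (a : Fin n → Fin 4) : PString n a = tens n (fun k => P1 (a k)) := rfl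

def zA (m : Bits n) : Fin n → Fin 4 := fun k => if m k = 0 then 0 else 3

lemma Zm_eq_PString (m : Bits n) : Zm n m = PString n (zA m) := by
  ext x y
  simp only [Zm, PString, Matrix.of_apply, zA]
  exact Finset.prod_congr rfl fun k _ => by rw [PZ_pow_fin]

lemma zA_injective : Function.Injective (zA (n := n)) := by
  intro m m' h
  funext k
  have := congrFun h k
  simp only [zA] at this
  have h0 : ∀ j j' : Fin 2, ((if j = 0 then (0:Fin 4) else 3) = if j' = 0 then 0 else 3) → j = j' := by decide
  exact h0 _ _ this

lemma PString_zero : PString n (fun _ => 0) = 1 := by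
  rw [PString_eq_tens]
  simp only [P1_zero]
  exact tens_one

lemma trace_PP (a a' : Fin n → Fin 4) :
    Matrix.trace (PString n a * (PString n a')ᴴ) = if a = a' then (2:ℂ)^n else 0 := by
  rw [PString_eq_tens a, PString_eq_tens a', tens_conjTranspose, tens_mul, trace_tens]
  simp only [trace_P1_mul_conj]
  by_cases h : a = a'
  · subst h; simp
  · rw [if_neg h]
    obtain ⟨k, hk⟩ := Function.ne_iff.mp h
    exact Finset.prod_eq_zero (mem_univ k) (if_neg hk)

lemma smul_PString_inj {a a' : Fin n → Fin 4} {c c' : ℂ} (hc' : c' ≠ 0)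
    (h : c • PString n a = c' • PString n a') : a = a' ∧ c = c' := by
  have h2 : (2:ℂ)^n ≠ 0 := pow_ne_zero _ two_ne_zero
  have h1 := congrArg (fun M => Matrix.trace (M * (PString n a')ᴴ)) h
  simp only [Matrix.smul_mul, Matrix.trace_smul, trace_PP, smul_eq_mul, if_pos rfl] at h1
  by_cases hd : a = a'
  · subst hd
    rw [if_pos rfl] at h1
    exact ⟨rfl, mul_right_cancel₀ h2 h1⟩
  · rw [if_neg hd, mul_zero] at h1
    exact absurd ((mul_eq_zero.mp h1.symm).resolve_right h2) hc'

lemma PString_injective : Function.Injective (PString n) := by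
  intro a a' h
  have : (1:ℂ) • PString n a = (1:ℂ) • PString n a' := by rw [h]
  exact (smul_PString_inj one_ne_zero this).1

/-! ### Zm lemmas -/

lemma PZ_mul_PZ : PZ * PZ = 1 := by rw [← P1_three]; exact P1_mul_self 3

lemma Zm_eq_tens (m : Bits n) : Zm n m = tens n (fun k => PZ ^ (m k : ℕ)) := rfl

lemma Zm_mul (m m' : Bits n) : Zm n m * Zm n m' = Zm n (m + m') := by
  rw [Zm_eq_tens m, Zm_eq_tens m', tens_mul]
  have key : ∀ j j' : Fin 2, PZ ^ (j : ℕ) * PZ ^ (j' : ℕ) = PZ ^ (((j + j') : Fin 2) : ℕ) := by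
    intro j j'
    fin_cases j <;> fin_cases j' <;> simp [pow_one, PZ_mul_PZ]
  have : (fun k => PZ ^ ((m k : ℕ)) * PZ ^ ((m' k : ℕ)))
      = fun k : Fin n => PZ ^ (((m + m') k : Fin 2) : ℕ) := funext fun k => key (m k) (m' k)
  rw [this, Zm_eq_tens]

lemma Zm_zero : Zm n 0 = 1 := by
  rw [Zm_eq_tens]
  have : (fun k : Fin n => PZ ^ (((0 : Bits n) k) : ℕ)) = fun _ => 1 := by
    funext k; simp
  rw [this, tens_one]

lemma Zm_injective : Function.Injective (Zm n) := by
  intro m m' h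
  rw [Zm_eq_PString, Zm_eq_PString] at h
  exact zA_injective (PString_injective h)

lemma PZ_diag_mul (j j' e : Fin 2) :
    (PZ ^ (j : ℕ)) e e * (PZ ^ (j' : ℕ)) e e = (PZ ^ (((j + j') : Fin 2) : ℕ)) e e := by
  fin_cases j <;> fin_cases j' <;> fin_cases e <;> simp [PZ, pow_one, Matrix.one_apply]

lemma Zm_diag_mul (z z' : Bits n) (b : Bits n) :
    Zm n z b b * Zm n z' b b = Zm n (z + z') b b := by
  simp only [Zm, Matrix.of_apply, ← Finset.prod_mul_distrib]
  exact Finset.prod_congr rfl fun k _ => PZ_diag_mul (z k) (z' k) (b k)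

lemma Zm_diag_pm (z : Bits n) (b : Bits n) : Zm n z b b = 1 ∨ Zm n z b b = -1 := by
  have hstep : ∀ x y : ℂ, (x = 1 ∨ x = -1) → (y = 1 ∨ y = -1) → (x * y = 1 ∨ x * y = -1) := by
    rintro x y (rfl | rfl) (rfl | rfl) <;> norm_num
  simp only [Zm, Matrix.of_apply]
  refine Finset.prod_induction _ (fun x => x = 1 ∨ x = -1) hstep (Or.inl rfl) ?_
  intro k _
  have : ∀ j e : Fin 2, (PZ ^ (j : ℕ)) e e = 1 ∨ (PZ ^ (j : ℕ)) e e = -1 := by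
    intro j e; fin_cases j <;> fin_cases e <;> simp [PZ, pow_one, Matrix.one_apply]
  exact this (z k) (b k)

lemma Zm_diag_zero (z : Bits n) : Zm n z (fun _ => 0) (fun _ => 0) = 1 := by
  simp only [Zm, Matrix.of_apply]
  refine Finset.prod_eq_one fun k _ => ?_
  have : ∀ j : Fin 2, (PZ ^ (j : ℕ)) 0 0 = 1 := by
    intro j; fin_cases j <;> simp [PZ, pow_one, Matrix.one_apply]
  exact this (z k)

lemma trace_Zm (m : Bits n) : Matrix.trace (Zm n m) = if m = 0 then (2:ℂ)^n else 0 := by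
  rw [Zm_eq_tens, trace_tens]
  have h1 : ∀ j : Fin 2, Matrix.trace (PZ ^ (j : ℕ)) = if j = 0 then (2:ℂ) else 0 := by
    intro j; fin_cases j <;> simp [PZ, pow_one, Matrix.trace_fin_two] <;> norm_num
  simp only [h1]
  by_cases h : m = 0
  · subst h; simp
  · rw [if_neg h]
    obtain ⟨k, hk⟩ := Function.ne_iff.mp h
    exact Finset.prod_eq_zero (mem_univ k) (if_neg hk)

lemma sum_diag_Zm (m : Bits n) :
    ∑ b : Bits n, Zm n m b b = if m = 0 then (2:ℂ)^n else 0 := by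
  rw [← trace_Zm]; rfl

/-! ### The projector onto |0..0> -/

def E (n : ℕ) : Matrix (Bits n) (Bits n) ℂ :=
  Matrix.of fun x y => if x = (fun _ => 0) ∧ y = (fun _ => 0) then 1 else 0

lemma sum_Zm_eq : ∑ m : Bits n, Zm n m = ((2:ℂ)^n) • E n := by
  ext x y
  simp only [Matrix.sum_apply, Zm, Matrix.of_apply, Matrix.smul_apply, E, smul_eq_mul]
  rw [← Fintype.piFinset_univ,
    ← Finset.prod_univ_sum (fun _ : Fin n => (univ : Finset (Fin 2)))
      (fun k j => (PZ ^ (j : ℕ)) (x k) (y k))]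
  have h1 : ∀ e e' : Fin 2, (∑ j : Fin 2, (PZ ^ (j : ℕ)) e e')
      = if e = 0 ∧ e' = 0 then 2 else 0 := by
    intro e e'; fin_cases e <;> fin_cases e' <;>
      simp [Fin.sum_univ_two, PZ, pow_one, Matrix.one_apply] <;> norm_num
  simp only [h1]
  by_cases h : x = (fun _ => 0) ∧ y = (fun _ => 0)
  · rw [if_pos h]
    obtain ⟨hx, hy⟩ := h
    rw [Finset.prod_congr rfl (fun k _ => if_pos ⟨congrFun hx k, congrFun hy k⟩)]
    simp [mul_comm]
  · rw [if_neg h, mul_zero]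
    have : ∃ k, ¬ (x k = 0 ∧ y k = 0) := by
      by_contra hc
      push_neg at hc
      exact h ⟨funext fun k => (hc k).1, funext fun k => (hc k).2⟩
    obtain ⟨k, hk⟩ := this
    exact Finset.prod_eq_zero (mem_univ k) (if_neg hk)

/-! ### Clifford manipulation -/

lemma conj_eq {M A B : Matrix (Bits n) (Bits n) ℂ} (hM2 : M * Mᴴ = 1)
    (h : Mᴴ * A * M = B) : A = M * B * Mᴴ := by
  rw [← h]
  rw [show M * (Mᴴ * A * M) * Mᴴ = (M * Mᴴ) * A * (M * Mᴴ) from by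
    simp only [Matrix.mul_assoc], hM2, one_mul, mul_one]

lemma conj_eq' {M A B : Matrix (Bits n) (Bits n) ℂ} (hM1 : Mᴴ * M = 1)
    (h : M * A * Mᴴ = B) : A = Mᴴ * B * M := by
  rw [← h]
  rw [show Mᴴ * (M * A * Mᴴ) * M = (Mᴴ * M) * A * (Mᴴ * M) from by
    simp only [Matrix.mul_assoc], hM1, one_mul, mul_one]

lemma phase_ne_zero {c : ℂ} (h : c ∈ ({1, -1, Complex.I, -Complex.I} : Set ℂ)) : c ≠ 0 := by
  rcases h with rfl | rfl | rfl | rfl <;> simp [Complex.I_ne_zero]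

lemma cliff_fwd {M : Matrix (Bits n) (Bits n) ℂ} (hM1 : Mᴴ * M = 1) (hM2 : M * Mᴴ = 1)
    (h : IsClifford n M) (b : Fin n → Fin 4) :
    ∃ c : ℂ, c ≠ 0 ∧ ∃ a : Fin n → Fin 4, M * PString n b * Mᴴ = c • PString n a := by
  have h' : ∀ a, ∃ c : ℂ, c ≠ 0 ∧ ∃ a', Mᴴ * PString n a * M = c • PString n a' := by
    intro a
    obtain ⟨c, hc, a', ha'⟩ := h a
    exact ⟨c, phase_ne_zero hc, a', ha'⟩
  choose c hc a' hA using h'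
  have hinj : Function.Injective a' := by
    intro x y hxy
    have e1 := hA x
    have e2 := hA y
    rw [hxy] at e1
    have e3 : PString n x = M * (c x • PString n (a' y)) * Mᴴ := conj_eq hM2 e1
    have e4 : PString n y = M * (c y • PString n (a' y)) * Mᴴ := conj_eq hM2 e2
    have e5 : (c y) • PString n x = (c x) • PString n y := by
      rw [e3, e4, Matrix.mul_smul, Matrix.smul_mul, Matrix.mul_smul, Matrix.smul_mul,
        smul_smul, smul_smul, mul_comm]
    exact (smul_PString_inj (hc x) e5).1
  have hsurj : Function.Surjective a' := Finite.injective_iff_surjective.mp hinj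
  obtain ⟨a, ha⟩ := hsurj b
  refine ⟨(c a)⁻¹, inv_ne_zero (hc a), a, ?_⟩
  have e1 := hA a
  rw [ha] at e1
  have e3 : PString n b = (c a)⁻¹ • (Mᴴ * PString n a * M) := by
    rw [e1, smul_smul, inv_mul_cancel₀ (hc a), one_smul]
  rw [e3]
  rw [Matrix.mul_smul, Matrix.smul_mul]
  congr 1
  rw [show M * (Mᴴ * PString n a * M) * Mᴴ = (M * Mᴴ) * PString n a * (M * Mᴴ) from by
    simp only [Matrix.mul_assoc], hM2, one_mul, mul_one]

/-! ### More Pauli facts -/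

lemma PString_mul_self (a : Fin n → Fin 4) : PString n a * PString n a = 1 := by
  rw [PString_eq_tens, tens_mul]
  have : (fun k => P1 (a k) * P1 (a k)) = fun _ : Fin n => (1 : Matrix (Fin 2) (Fin 2) ℂ) :=
    funext fun k => P1_mul_self (a k)
  rw [this, tens_one]

lemma c_pm {c : ℂ} {a : Fin n → Fin 4}
    (h : (c • PString n a) * (c • PString n a) = 1) : c = 1 ∨ c = -1 := by
  rw [Matrix.smul_mul, Matrix.mul_smul, smul_smul, PString_mul_self] at h
  have h00 := Matrix.ext_iff.2 h (fun _ => (0:Fin 2)) (fun _ => (0:Fin 2))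
  simp only [Matrix.smul_apply, Matrix.one_apply_eq, smul_eq_mul, mul_one] at h00
  exact mul_self_eq_one_iff.mp h00

lemma conj_mul {M A B : Matrix (Bits n) (Bits n) ℂ} (hM1 : Mᴴ * M = 1) :
    (M * A * Mᴴ) * (M * B * Mᴴ) = M * (A * B) * Mᴴ := by
  calc (M * A * Mᴴ) * (M * B * Mᴴ) = M * (A * ((Mᴴ * M) * (B * Mᴴ))) := by
        simp only [Matrix.mul_assoc]
    _ = M * (A * B) * Mᴴ := by rw [hM1, one_mul]; simp only [Matrix.mul_assoc]

lemma zA_mem (z : Bits n) (k : Fin n) : zA z k = 0 ∨ zA z k = 3 := by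
  simp only [zA]; split <;> simp

/-! ### The Z-type stabilizer index set -/

def Tset (n : ℕ) (W : Matrix (Bits n) (Bits n) ℂ) : Finset (Bits n) :=
  @Finset.filter _ (fun m => ∃ z, W * Zm n m * Wᴴ = Zm n z ∨ W * Zm n m * Wᴴ = -Zm n z)
    (Classical.decPred _) Finset.univ

lemma mem_Tset {W : Matrix (Bits n) (Bits n) ℂ} {m : Bits n} :
    m ∈ Tset n W ↔ ∃ z, W * Zm n m * Wᴴ = Zm n z ∨ W * Zm n m * Wᴴ = -Zm n z := by
  simp [Tset]

set_option maxHeartbeats 1600000 in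
lemma key {W : Matrix (Bits n) (Bits n) ℂ} (hW1 : Wᴴ * W = 1) (hW2 : W * Wᴴ = 1)
    (hWC : ∀ m : Bits n, ∃ c : ℂ, c ≠ 0 ∧ ∃ a, W * Zm n m * Wᴴ = c • PString n a) :
    univ.sup' univ_nonempty (fun b : Bits n => ‖W b (fun _ => 0)‖ ^ 2)
      = ((Tset n W).card : ℝ) / 2 ^ n := by
  have h2n : ((2:ℂ))^n ≠ 0 := pow_ne_zero _ two_ne_zero
  choose c hc a hA using hWC
  have hsq : ∀ m : Bits n, (W * Zm n m * Wᴴ) * (W * Zm n m * Wᴴ) = 1 := by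
    intro m
    have hmm : m + m = 0 := by
      funext k
      have : ∀ j : Fin 2, j + j = 0 := by decide
      exact this (m k)
    rw [conj_mul hW1, Zm_mul, hmm, Zm_zero, mul_one, hW2]
  have hcpm : ∀ m : Bits n, c m = 1 ∨ c m = -1 := by
    intro m
    refine c_pm (a := a m) ?_
    rw [← hA m]; exact hsq m
  set zf : Bits n → Bits n := fun m k => if a m k = 3 then 1 else 0 with hzf
  have hz_rep : ∀ m, (∀ k, a m k = 0 ∨ a m k = 3) → a m = zA (zf m) := by
    intro m h
    funext k
    rcases h k with h' | h' <;> simp [zA, hzf, h']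
  have hZT : ∀ m, m ∈ Tset n W ↔ ∀ k, a m k = 0 ∨ a m k = 3 := by
    intro m
    constructor
    · intro hm
      obtain ⟨zz, hzz | hzz⟩ := mem_Tset.1 hm
      · have h1 : c m • PString n (a m) = (1:ℂ) • PString n (zA zz) := by
          rw [one_smul, ← Zm_eq_PString, ← hzz, hA m]
        have h2 := smul_PString_inj one_ne_zero h1
        intro k; rw [h2.1]; exact zA_mem zz k
      · have h1 : c m • PString n (a m) = (-1:ℂ) • PString n (zA zz) := by
          rw [neg_one_smul, ← Zm_eq_PString, ← hzz, hA m]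
        have h2 := smul_PString_inj (by norm_num) h1
        intro k; rw [h2.1]; exact zA_mem zz k
    · intro h
      refine mem_Tset.2 ⟨zf m, ?_⟩
      have hAm : W * Zm n m * Wᴴ = c m • Zm n (zf m) := by
        rw [hA m, hz_rep m h, ← Zm_eq_PString]
      rcases hcpm m with h' | h'
      · left; rw [hAm, h', one_smul]
      · right; rw [hAm, h', neg_one_smul]
  have hZmem : ∀ m ∈ Tset n W, W * Zm n m * Wᴴ = c m • Zm n (zf m) := by
    intro m hm
    rw [hA m, hz_rep m ((hZT m).1 hm), ← Zm_eq_PString]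
  have hclos : ∀ m ∈ Tset n W, ∀ m' ∈ Tset n W,
      (m + m') ∈ Tset n W ∧ c (m + m') = c m * c m' ∧ zf (m + m') = zf m + zf m' := by
    intro m hm m' hm'
    have h1 : W * Zm n (m + m') * Wᴴ = (c m * c m') • Zm n (zf m + zf m') := by
      rw [← Zm_mul, ← conj_mul hW1, hZmem m hm, hZmem m' hm', Matrix.smul_mul, Matrix.mul_smul,
        smul_smul, Zm_mul]
    have h2 : c (m + m') • PString n (a (m + m')) = (c m * c m') • PString n (zA (zf m + zf m')) := by
      rw [← hA (m + m'), h1, Zm_eq_PString]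
    have h3 := smul_PString_inj (mul_ne_zero (hc m) (hc m')) h2
    have hz4 : ∀ k, a (m + m') k = 0 ∨ a (m + m') k = 3 := by
      intro k; rw [h3.1]; exact zA_mem _ k
    refine ⟨(hZT _).2 hz4, h3.2, ?_⟩
    funext k
    have hk : zf (m + m') k = if a (m + m') k = 3 then 1 else 0 := rfl
    rw [hk, h3.1]
    have hval : ∀ j : Fin 2, (if (if j = 0 then (0:Fin 4) else 3) = 3 then (1:Fin 2) else 0) = j := by
      decide
    have : zA (zf m + zf m') k = if (zf m + zf m') k = 0 then 0 else 3 := rfl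
    rw [this]
    exact hval ((zf m + zf m') k)
  have h0W : W * Zm n 0 * Wᴴ = 1 := by rw [Zm_zero, mul_one, hW2]
  have h0T : (0 : Bits n) ∈ Tset n W := mem_Tset.2 ⟨0, Or.inl (by rw [h0W, Zm_zero])⟩
  have hc0 : c 0 = 1 ∧ a 0 = (fun _ => 0) := by
    have h1 : (1:ℂ) • PString n (fun _ => 0) = c 0 • PString n (a 0) := by
      rw [one_smul, PString_zero, ← h0W, hA 0]
    have h2 := smul_PString_inj (hc 0) h1
    exact ⟨h2.2.symm, h2.1.symm⟩
  have hzf0 : zf 0 = 0 := by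
    funext k
    have : zf 0 k = if a 0 k = 3 then 1 else 0 := rfl
    rw [this, hc0.2]
    simp
  have hzinj0 : ∀ m ∈ Tset n W, zf m = 0 → m = 0 := by
    intro m hm h0
    have h1 : W * Zm n m * Wᴴ = c m • 1 := by rw [hZmem m hm, h0, Zm_zero]
    have h2 : Zm n m = c m • 1 := by
      rw [conj_eq' hW1 h1, Matrix.mul_smul, mul_one, Matrix.smul_mul, hW1]
    have h3 : c m = 1 := by
      have h4 := Matrix.ext_iff.2 h2 (fun _ => (0:Fin 2)) (fun _ => (0:Fin 2))
      rw [Zm_diag_zero, Matrix.smul_apply, Matrix.one_apply_eq, smul_eq_mul, mul_one] at h4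
      exact h4.symm
    rw [h3, one_smul] at h2
    exact Zm_injective (h2.trans Zm_zero.symm)
  have hdiag0 : ∀ m, m ∉ Tset n W → ∀ b : Bits n, PString n (a m) b b = 0 := by
    intro m hm b
    have hex : ∃ k, ¬(a m k = 0 ∨ a m k = 3) := by
      by_contra hco
      push_neg at hco
      exact hm ((hZT m).2 hco)
    obtain ⟨k, hk⟩ := hex
    push_neg at hk
    show (∏ k', P1 (a m k') (b k') (b k')) = 0
    refine Finset.prod_eq_zero (mem_univ k) ?_
    have hP : ∀ i : Fin 4, i ≠ 0 → i ≠ 3 → ∀ e : Fin 2, P1 i e e = 0 := by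
      intro i h1 h2 e
      fin_cases i <;> first
        | exact absurd rfl h1
        | exact absurd rfl h2
        | (fin_cases e <;> simp [P1])
    exact hP _ hk.1 hk.2 _
  set F : Bits n → ℂ := fun b => ∑ m ∈ Tset n W, c m * Zm n (zf m) b b with hF
  have hαF : ∀ b : Bits n, ((‖W b (fun _ => 0)‖ ^ 2 : ℝ) : ℂ) * 2^n = F b := by
    intro b
    have e1 : ((‖W b (fun _ => 0)‖ ^ 2 : ℝ) : ℂ) = (W * E n * Wᴴ) b b := by
      rw [Matrix.mul_assoc, Matrix.mul_apply]
      rw [Finset.sum_eq_single (fun _ => (0:Fin 2))]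
      · rw [Matrix.mul_apply, Finset.sum_eq_single (fun _ => (0:Fin 2))]
        · have hE : E n (fun _ => (0:Fin 2)) (fun _ => (0:Fin 2)) = 1 := by
            simp [E]
          rw [hE, one_mul, Matrix.conjTranspose_apply, Complex.sq_norm]
          exact (Complex.mul_conj _).symm
        · intro y _ hy
          have : E n (fun _ => (0:Fin 2)) y = 0 := by simp [E, hy]
          rw [this, zero_mul]
        · intro h; exact absurd (mem_univ _) h
      · intro x _ hx
        have : (E n * Wᴴ) x b = 0 := by
          rw [Matrix.mul_apply]
          refine Finset.sum_eq_zero fun y _ => ?_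
          have : E n x y = 0 := by simp [E, hx]
          rw [this, zero_mul]
        rw [this, mul_zero]
      · intro h; exact absurd (mem_univ _) h
    have e2 : (2:ℂ)^n • (W * E n * Wᴴ) = ∑ m : Bits n, (c m • PString n (a m)) := by
      calc (2:ℂ)^n • (W * E n * Wᴴ) = W * (((2:ℂ)^n) • E n) * Wᴴ := by
            rw [Matrix.mul_smul, Matrix.smul_mul]
        _ = W * (∑ m : Bits n, Zm n m) * Wᴴ := by rw [sum_Zm_eq]
        _ = ∑ m : Bits n, W * Zm n m * Wᴴ := by rw [Matrix.mul_sum, Matrix.sum_mul]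
        _ = ∑ m : Bits n, c m • PString n (a m) := Finset.sum_congr rfl fun m _ => hA m
    have e3 : (2:ℂ)^n * (W * E n * Wᴴ) b b = ∑ m : Bits n, c m * PString n (a m) b b := by
      have h4 := Matrix.ext_iff.2 e2 b b
      rw [Matrix.smul_apply, smul_eq_mul] at h4
      rw [h4, Matrix.sum_apply]
      exact Finset.sum_congr rfl fun m _ => by rw [Matrix.smul_apply, smul_eq_mul]
    rw [e1, mul_comm, e3]
    rw [← Finset.sum_subset (Finset.subset_univ (Tset n W))]
    · exact Finset.sum_congr rfl fun m hm => by
        rw [hz_rep m ((hZT m).1 hm), ← Zm_eq_PString]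
    · intro m _ hm
      rw [hdiag0 m hm b, mul_zero]
  have hdich : ∀ b : Bits n, F b = 0 ∨ F b = ((Tset n W).card : ℂ) := by
    intro b
    by_cases hall : ∀ m ∈ Tset n W, c m * Zm n (zf m) b b = 1
    · right
      have hFb : F b = ∑ m ∈ Tset n W, c m * Zm n (zf m) b b := rfl
      rw [hFb, Finset.sum_congr rfl hall]
      simp
    · left
      push_neg at hall
      obtain ⟨m0, hm0T, hm0⟩ := hall
      have hval : ∀ m ∈ Tset n W, c m * Zm n (zf m) b b = 1 ∨ c m * Zm n (zf m) b b = -1 := by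
        intro m hm
        rcases hcpm m with h | h <;> rcases Zm_diag_pm (zf m) b with h' | h' <;>
          rw [h, h'] <;> norm_num
      have hm0v : c m0 * Zm n (zf m0) b b = -1 := (hval m0 hm0T).resolve_left hm0
      have hmm0 : ∀ m ∈ Tset n W, m0 + m ∈ Tset n W := fun m hm => (hclos m0 hm0T m hm).1
      have hinvol : ∀ m : Bits n, m0 + (m0 + m) = m := by
        intro m
        funext k
        have : ∀ j j' : Fin 2, j + (j + j') = j' := by decide
        exact this (m0 k) (m k)
      have hFb : F b = ∑ m ∈ Tset n W, c m * Zm n (zf m) b b := rfl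
      have hre : F b = -F b := by
        rw [hFb]
        calc (∑ m ∈ Tset n W, c m * Zm n (zf m) b b)
            = ∑ m ∈ Tset n W, c (m0 + m) * Zm n (zf (m0 + m)) b b := by
              refine Finset.sum_nbij' (fun m => m0 + m) (fun m => m0 + m)
                hmm0 hmm0 (fun m _ => hinvol m) (fun m _ => hinvol m) ?_
              intro m hm
              rw [hinvol m]
          _ = ∑ m ∈ Tset n W, (c m0 * Zm n (zf m0) b b) * (c m * Zm n (zf m) b b) := by
              refine Finset.sum_congr rfl fun m hm => ?_
              obtain ⟨_, hcm, hzm⟩ := hclos m0 hm0T m hm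
              rw [hcm, hzm, ← Zm_diag_mul]
              ring
          _ = -F b := by
              rw [Finset.sum_congr rfl fun m hm => by rw [hm0v, neg_one_mul]]
              rw [hFb, ← Finset.sum_neg_distrib]
      linear_combination hre / 2
  have hsumF : ∑ b : Bits n, F b = (2:ℂ)^n := by
    calc ∑ b : Bits n, F b = ∑ m ∈ Tset n W, ∑ b : Bits n, c m * Zm n (zf m) b b := by
          rw [hF]; exact Finset.sum_comm
      _ = ∑ m ∈ Tset n W, c m * (if zf m = 0 then (2:ℂ)^n else 0) := by
          refine Finset.sum_congr rfl fun m _ => ?_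
          rw [← Finset.mul_sum, sum_diag_Zm]
      _ = (2:ℂ)^n := by
          rw [Finset.sum_eq_single (0 : Bits n)]
          · rw [hc0.1, if_pos hzf0, one_mul]
          · intro m hm hne
            rw [if_neg (fun h => hne (hzinj0 m hm h)), mul_zero]
          · intro h; exact absurd h0T h
  have hex : ∃ b : Bits n, F b = ((Tset n W).card : ℂ) := by
    by_contra hcon
    push_neg at hcon
    have hz : ∀ b : Bits n, F b = 0 := fun b => (hdich b).resolve_right (hcon b)
    rw [Finset.sum_congr rfl fun b _ => hz b, Finset.sum_const, smul_zero] at hsumF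
    exact h2n hsumF.symm
  have hcardpos : (Tset n W).card ≠ 0 := Finset.card_ne_zero_of_mem h0T
  have hαval : ∀ b : Bits n, ‖W b (fun _ => 0)‖ ^ 2 = 0 ∨
      ‖W b (fun _ => 0)‖ ^ 2 = ((Tset n W).card : ℝ) / 2 ^ n := by
    intro b
    rcases hdich b with h | h
    · left
      have h5 := hαF b
      rw [h] at h5
      have h6 := (mul_eq_zero.mp h5).resolve_right h2n
      exact_mod_cast h6
    · right
      have h5 := hαF b
      rw [h] at h5
      have h6 : ((‖W b (fun _ => 0)‖ ^ 2 : ℝ) : ℂ)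
          = (((Tset n W).card : ℝ) / 2 ^ n : ℝ) := by
        rw [Complex.ofReal_div]
        push_cast
        rw [eq_div_iff h2n]
        exact_mod_cast h5
      exact_mod_cast h6
  apply le_antisymm
  · apply Finset.sup'_le
    intro b _
    rcases hαval b with h | h
    · rw [h]; positivity
    · rw [h]
  · obtain ⟨bs, hbs⟩ := hex
    have hval : ‖W bs (fun _ => 0)‖ ^ 2 = ((Tset n W).card : ℝ) / 2 ^ n := by
      rcases hαval bs with h | h
      · exfalso
        have h5 := hαF bs
        rw [h, hbs] at h5
        simp at h5
        exact hcardpos (by exact_mod_cast h5.symm)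
      · exact h
    calc ((Tset n W).card : ℝ) / 2 ^ n = _ := hval.symm
      _ ≤ _ := Finset.le_sup' (fun b : Bits n => ‖W b fun _ => 0‖ ^ 2) (mem_univ bs)

lemma bits_add_self (m : Bits n) : m + m = 0 := by
  funext k
  have : ∀ j : Fin 2, j + j = 0 := by decide
  exact this (m k)

lemma conj_mul' {M A B : Matrix (Bits n) (Bits n) ℂ} (hM2 : M * Mᴴ = 1) :
    (Mᴴ * A * M) * (Mᴴ * B * M) = Mᴴ * (A * B) * M := by
  calc (Mᴴ * A * M) * (Mᴴ * B * M) = Mᴴ * (A * ((M * Mᴴ) * (B * M))) := by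
        simp only [Matrix.mul_assoc]
    _ = Mᴴ * (A * B) * M := by rw [hM2, one_mul]; simp only [Matrix.mul_assoc]

lemma conj_conj' {M A : Matrix (Bits n) (Bits n) ℂ} (hM1 : Mᴴ * M = 1) :
    Mᴴ * (M * A * Mᴴ) * M = A := by
  rw [show Mᴴ * (M * A * Mᴴ) * M = (Mᴴ * M) * A * (Mᴴ * M) from by
    simp only [Matrix.mul_assoc], hM1, one_mul, mul_one]

lemma conj_conj {M A : Matrix (Bits n) (Bits n) ℂ} (hM2 : M * Mᴴ = 1) :
    M * (Mᴴ * A * M) * Mᴴ = A := by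
  rw [show M * (Mᴴ * A * M) * Mᴴ = (M * Mᴴ) * A * (M * Mᴴ) from by
    simp only [Matrix.mul_assoc], hM2, one_mul, mul_one]

lemma Zm_ne_neg_one (m : Bits n) : Zm n m ≠ -1 := by
  intro h
  have h0 := Matrix.ext_iff.2 h (fun _ => (0:Fin 2)) (fun _ => (0:Fin 2))
  rw [Zm_diag_zero] at h0
  rw [Matrix.neg_apply, Matrix.one_apply_eq] at h0
  norm_num at h0

lemma Zm_eq_one {m : Bits n} (h : Zm n m = 1) : m = 0 :=
  Zm_injective (h.trans Zm_zero.symm)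

end S14

open S14 in
/-- for a Clifford `V`, `O = V†|0⟩⟨0|V`, and a full set of stabilizer
MUBs whose stabilizer groups cover every nontrivial Pauli exactly once, the coefficients
`α_{U,b} = |⟨b|UV†|0⟩|²` satisfy `Σ_U max_b α_{U,b} = 2`. -/
theorem stmt14 (n : ℕ) (ι : Type) [Fintype ι] (hι : Fintype.card ι = 2 ^ n + 1)
    (U : ι → Matrix (Bits n) (Bits n) ℂ)
    (hU : ∀ u, (U u)ᴴ * U u = 1 ∧ U u * (U u)ᴴ = 1)
    (hUC : ∀ u, IsClifford n (U u))
    (hcover : ∀ a : Fin n → Fin 4, a ≠ (fun _ => 0) →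
      ∃! q : ι × Bits n, q.2 ≠ (fun _ => 0) ∧
        ((U q.1)ᴴ * Zm n q.2 * U q.1 = PString n a ∨
          (U q.1)ᴴ * Zm n q.2 * U q.1 = -(PString n a)))
    (V : Matrix (Bits n) (Bits n) ℂ)
    (hV : Vᴴ * V = 1 ∧ V * Vᴴ = 1) (hVC : IsClifford n V) :
    ∑ u : ι, (Finset.univ.sup' Finset.univ_nonempty
        fun b : Bits n => ‖(U u * Vᴴ) b (fun _ => 0)‖ ^ 2) = 2 := by
  have hW1 : ∀ u, (U u * Vᴴ)ᴴ * (U u * Vᴴ) = 1 := by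
    intro u
    rw [Matrix.conjTranspose_mul, Matrix.conjTranspose_conjTranspose]
    calc V * (U u)ᴴ * (U u * Vᴴ) = V * (((U u)ᴴ * U u) * Vᴴ) := by
          simp only [Matrix.mul_assoc]
      _ = 1 := by rw [(hU u).1, one_mul, hV.2]
  have hW2 : ∀ u, (U u * Vᴴ) * (U u * Vᴴ)ᴴ = 1 := by
    intro u
    rw [Matrix.conjTranspose_mul, Matrix.conjTranspose_conjTranspose]
    calc U u * Vᴴ * (V * (U u)ᴴ) = U u * ((Vᴴ * V) * (U u)ᴴ) := by
          simp only [Matrix.mul_assoc]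
      _ = 1 := by rw [hV.1, one_mul, (hU u).2]
  have hWconj : ∀ u (A : Matrix (Bits n) (Bits n) ℂ),
      (U u * Vᴴ) * A * (U u * Vᴴ)ᴴ = U u * (Vᴴ * A * V) * (U u)ᴴ := by
    intro u A
    rw [Matrix.conjTranspose_mul, Matrix.conjTranspose_conjTranspose]
    simp only [Matrix.mul_assoc]
  -- conjugation of Zm by Vᴴ on the left
  have hVZ : ∀ m : Bits n, ∃ c : ℂ, (c = 1 ∨ c = -1) ∧ ∃ a,
      Vᴴ * Zm n m * V = c • PString n a := by
    intro m
    obtain ⟨c, hcmem, a1, ha1⟩ := hVC (zA m)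
    rw [← Zm_eq_PString] at ha1
    refine ⟨c, ?_, a1, ha1⟩
    refine c_pm (a := a1) ?_
    rw [← ha1, conj_mul' hV.2, Zm_mul, bits_add_self, Zm_zero, mul_one, hV.1]
  have hfwdU : ∀ u (b : Fin n → Fin 4), ∃ c : ℂ, c ≠ 0 ∧ ∃ a,
      U u * PString n b * (U u)ᴴ = c • PString n a :=
    fun u => cliff_fwd (hU u).1 (hU u).2 (hUC u)
  have hWC : ∀ u (m : Bits n), ∃ c : ℂ, c ≠ 0 ∧ ∃ a,
      (U u * Vᴴ) * Zm n m * (U u * Vᴴ)ᴴ = c • PString n a := by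
    intro u m
    obtain ⟨c, hcpm, a1, ha1⟩ := hVZ m
    obtain ⟨c2, hc2, a2, ha2⟩ := hfwdU u a1
    have hcne : c ≠ 0 := by rcases hcpm with h | h <;> rw [h] <;> norm_num
    refine ⟨c * c2, mul_ne_zero hcne hc2, a2, ?_⟩
    rw [hWconj, ha1, Matrix.mul_smul, Matrix.smul_mul, ha2, smul_smul]
  -- the counting claim
  have claim : ∀ m : Bits n, m ≠ (fun _ => 0) → ∃! u : ι, m ∈ Tset n (U u * Vᴴ) := by
    intro m hm
    obtain ⟨c, hcpm, a1, ha1⟩ := hVZ m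
    have hcne : c ≠ 0 := by rcases hcpm with h | h <;> rw [h] <;> norm_num
    have ha1ne : a1 ≠ (fun _ => 0) := by
      intro h0
      apply hm
      rw [h0, PString_zero] at ha1
      have hZ1 : Zm n m = c • 1 := by
        rw [conj_eq hV.2 ha1, Matrix.mul_smul, mul_one, Matrix.smul_mul, hV.2]
      have hc1 : c = 1 := by
        have h4 := Matrix.ext_iff.2 hZ1 (fun _ => (0:Fin 2)) (fun _ => (0:Fin 2))
        rw [Zm_diag_zero, Matrix.smul_apply, Matrix.one_apply_eq, smul_eq_mul, mul_one] at h4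
        exact h4.symm
      rw [hc1, one_smul] at hZ1
      exact Zm_eq_one hZ1
    -- the statement of hcover for a1
    obtain ⟨⟨u0, z0⟩, ⟨hz0ne, hz0⟩, huniq⟩ := hcover a1 ha1ne
    -- scalar form of hz0
    obtain ⟨d, hdpm, hd⟩ : ∃ d : ℂ, (d = 1 ∨ d = -1) ∧
        (U u0)ᴴ * Zm n z0 * U u0 = d • PString n a1 := by
      rcases hz0 with h | h
      · exact ⟨1, Or.inl rfl, by rw [one_smul]; exact h⟩
      · exact ⟨-1, Or.inr rfl, by rw [neg_one_smul]; exact h⟩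
    have hWZ : ∀ u, (U u * Vᴴ) * Zm n m * (U u * Vᴴ)ᴴ
        = c • (U u * PString n a1 * (U u)ᴴ) := by
      intro u
      rw [hWconj, ha1, Matrix.mul_smul, Matrix.smul_mul]
    refine ⟨u0, ?_, ?_⟩
    · -- existence : m ∈ Tset n (U u0 * Vᴴ)
      have hP : U u0 * PString n a1 * (U u0)ᴴ = d • Zm n z0 := by
        have h5 : U u0 * ((U u0)ᴴ * Zm n z0 * U u0) * (U u0)ᴴ = Zm n z0 :=
          conj_conj (hU u0).2
        rw [hd] at h5
        rw [Matrix.mul_smul, Matrix.smul_mul] at h5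
        -- h5 : d • (U u0 * PString n a1 * (U u0)ᴴ) = Zm n z0
        have hd2 : d * d = 1 := by rcases hdpm with h | h <;> rw [h] <;> norm_num
        calc U u0 * PString n a1 * (U u0)ᴴ
            = (d * d) • (U u0 * PString n a1 * (U u0)ᴴ) := by rw [hd2, one_smul]
          _ = d • Zm n z0 := by rw [← smul_smul, h5]
      have hfin : (U u0 * Vᴴ) * Zm n m * (U u0 * Vᴴ)ᴴ = (c * d) • Zm n z0 := by
        rw [hWZ u0, hP, smul_smul]
      have hcd : c * d = 1 ∨ c * d = -1 := by
        rcases hcpm with h | h <;> rcases hdpm with h' | h' <;> rw [h, h'] <;> norm_num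
      refine mem_Tset.2 ⟨z0, ?_⟩
      rcases hcd with h | h
      · left; rw [hfin, h, one_smul]
      · right; rw [hfin, h, neg_one_smul]
    · -- uniqueness
      intro u hu
      obtain ⟨z, hz⟩ := mem_Tset.1 hu
      obtain ⟨e, hepm, he⟩ : ∃ e : ℂ, (e = 1 ∨ e = -1) ∧
          (U u * Vᴴ) * Zm n m * (U u * Vᴴ)ᴴ = e • Zm n z := by
        rcases hz with h | h
        · exact ⟨1, Or.inl rfl, by rw [one_smul]; exact h⟩
        · exact ⟨-1, Or.inr rfl, by rw [neg_one_smul]; exact h⟩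
      have hene : e ≠ 0 := by rcases hepm with h | h <;> rw [h] <;> norm_num
      have he2 : e * e = 1 := by rcases hepm with h | h <;> rw [h] <;> norm_num
      -- z ≠ 0
      have hzne : z ≠ (fun _ => 0) := by
        intro h0
        apply hm
        rw [h0] at he
        rw [show Zm n (fun _ => (0:Fin 2)) = (1 : Matrix (Bits n) (Bits n) ℂ) from Zm_zero] at he
        have hZ1 : Zm n m = e • 1 := by
          rw [conj_eq' (hW1 u) he, Matrix.mul_smul, mul_one, Matrix.smul_mul, hW1 u]
        have hc1 : e = 1 := by
          have h4 := Matrix.ext_iff.2 hZ1 (fun _ => (0:Fin 2)) (fun _ => (0:Fin 2))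
          rw [Zm_diag_zero, Matrix.smul_apply, Matrix.one_apply_eq, smul_eq_mul, mul_one] at h4
          exact h4.symm
        rw [hc1, one_smul] at hZ1
        exact Zm_eq_one hZ1
      -- derive the hcover predicate for (u, z)
      have hkey : (U u)ᴴ * Zm n z * U u = (e * c) • PString n a1 := by
        have h5 : e • Zm n z = c • (U u * PString n a1 * (U u)ᴴ) := by
          rw [← he, hWZ u]
        have h6 : Zm n z = (e * c) • (U u * PString n a1 * (U u)ᴴ) := by
          calc Zm n z = (e * e) • Zm n z := by rw [he2, one_smul]
            _ = e • (e • Zm n z) := by rw [smul_smul]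
            _ = e • (c • (U u * PString n a1 * (U u)ᴴ)) := by rw [h5]
            _ = (e * c) • (U u * PString n a1 * (U u)ᴴ) := by rw [smul_smul]
        rw [h6, Matrix.mul_smul, Matrix.smul_mul, conj_conj' (hU u).1]
      have hec : e * c = 1 ∨ e * c = -1 := by
        rcases hepm with h | h <;> rcases hcpm with h' | h' <;> rw [h, h'] <;> norm_num
      have hpred : (U u)ᴴ * Zm n z * U u = PString n a1 ∨
          (U u)ᴴ * Zm n z * U u = -(PString n a1) := by
        rcases hec with h | h
        · left; rw [hkey, h, one_smul]
        · right; rw [hkey, h, neg_one_smul]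
      have := huniq (u, z) ⟨hzne, hpred⟩
      exact congrArg Prod.fst this
  -- zero is always in Tset
  have h0T : ∀ u, (0 : Bits n) ∈ Tset n (U u * Vᴴ) := by
    intro u
    refine mem_Tset.2 ⟨0, Or.inl ?_⟩
    rw [Zm_zero, mul_one, hW2 u]
  -- counting
  have hcard2 : Fintype.card (Bits n) = 2 ^ n := by
    simp [Fintype.card_fun]
  have hcount : ∑ u : ι, (Tset n (U u * Vᴴ)).card = 2 ^ (n + 1) := by
    have hstep : ∀ u : ι, (Tset n (U u * Vᴴ)).card
        = ((Tset n (U u * Vᴴ)).erase 0).card + 1 :=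
      fun u => (Finset.card_erase_add_one (h0T u)).symm
    have herase : ∀ u : ι, ((Tset n (U u * Vᴴ)).erase 0)
        = (Finset.univ.erase (0 : Bits n)).filter (· ∈ Tset n (U u * Vᴴ)) := by
      intro u
      ext m
      simp only [Finset.mem_erase, Finset.mem_filter, Finset.mem_univ, true_and]
      tauto
    have hmain : ∑ u : ι, ((Tset n (U u * Vᴴ)).erase 0).card = 2 ^ n - 1 := by
      have h1 : ∀ u : ι, ((Tset n (U u * Vᴴ)).erase 0).card
          = ∑ m ∈ Finset.univ.erase (0 : Bits n),
              (if m ∈ Tset n (U u * Vᴴ) then 1 else 0) := by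
        intro u
        rw [herase u, Finset.card_filter]
      rw [Finset.sum_congr rfl fun u _ => h1 u, Finset.sum_comm]
      have h2 : ∀ m ∈ Finset.univ.erase (0 : Bits n),
          (∑ u : ι, if m ∈ Tset n (U u * Vᴴ) then 1 else 0) = 1 := by
        intro m hmm
        have hmne : m ≠ (fun _ => 0) := Finset.ne_of_mem_erase hmm
        obtain ⟨u0, hu0, huu⟩ := claim m hmne
        rw [Finset.sum_eq_single u0]
        · rw [if_pos hu0]
        · intro u _ hne
          rw [if_neg fun h => hne (huu u h)]
        · intro h; exact absurd (mem_univ u0) h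
      rw [Finset.sum_congr rfl h2, Finset.sum_const, smul_eq_mul, mul_one,
        Finset.card_erase_of_mem (mem_univ _), Finset.card_univ, hcard2]
    rw [Finset.sum_congr rfl fun u _ => hstep u, Finset.sum_add_distrib, hmain,
      Finset.sum_const, smul_eq_mul, mul_one, Finset.card_univ, hι]
    have hge : 1 ≤ 2 ^ n := Nat.one_le_two_pow
    rw [pow_succ]
    omega
  -- final computation
  have hkeyall : ∀ u : ι, (Finset.univ.sup' Finset.univ_nonempty
      fun b : Bits n => ‖(U u * Vᴴ) b (fun _ => 0)‖ ^ 2)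
      = ((Tset n (U u * Vᴴ)).card : ℝ) / 2 ^ n :=
    fun u => key (hW1 u) (hW2 u) (hWC u)
  rw [Finset.sum_congr rfl fun u _ => hkeyall u, ← Finset.sum_div]
  rw [← Nat.cast_sum, hcount]
  rw [pow_succ]
  push_cast
  have : (2:ℝ) ^ n ≠ 0 := by positivity
  field_simp
end
end

section
/- Let V, U be n-qubit Cliffords and write the Z-Tableau of UV† as [C, D], meaning (UV†)† Z_i (UV†) = ± ∏_j X_j^{C_{ij}} Z_j^{D_{ij}}. Let r = rank_{𝔽₂}(C). Then the distribution b ↦ α_{U,b} = |⟨b|UV†|0⟩|² takes the value 2^{-r} on exactly 2^r strings b and 0 on the remaining 2^n − 2^r strings. -/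
open Matrix Finset

noncomputable section

/-- The single-qubit Pauli-X matrix. -/
def PX : Matrix (Fin 2) (Fin 2) ℂ := !![0, 1; 1, 0]

/-- The Pauli string `∏_j X_j^{c_j} Z_j^{d_j}`. -/
def XZString (n : ℕ) (c d : Fin n → ZMod 2) : Matrix (Bits n) (Bits n) ℂ :=
  Matrix.of fun x y => ∏ k, (PX ^ (c k).val * PZ ^ (d k).val) (x k) (y k)

namespace S15

lemma zmod2_cases : ∀ c : ZMod 2, c = 0 ∨ c = 1 := by decide

lemma PZ_pow_apply (a : Fin 2) (x y : Fin 2) :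
    (PZ ^ (a : ℕ)) x y = if x = y then (-1 : ℂ) ^ ((a : ℕ) * (x : ℕ)) else 0 := by
  fin_cases a <;> fin_cases x <;> fin_cases y <;>
    simp [PZ, pow_succ, Matrix.one_apply]

lemma PXZ_zero_zero (c d : ZMod 2) :
    (PX ^ c.val * PZ ^ d.val) 0 0 = if c = 0 then 1 else 0 := by
  rcases zmod2_cases c with rfl | rfl <;> rcases zmod2_cases d with rfl | rfl <;>
    norm_num [PX, PZ, ZMod.val_zero, ZMod.val_one, Matrix.mul_apply, Fin.sum_univ_two,
      Matrix.one_apply]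

lemma PXZ_zero_row (d : ZMod 2) (y : Fin 2) :
    (PX ^ (0 : ZMod 2).val * PZ ^ d.val) 0 y = if y = 0 then 1 else 0 := by
  rcases zmod2_cases d with rfl | rfl <;> fin_cases y <;>
    norm_num [PX, PZ, ZMod.val_zero, ZMod.val_one, Matrix.mul_apply, Fin.sum_univ_two,
      Matrix.one_apply]

lemma val_one_one : ((1 : ZMod 2) + 1).val = 0 := rfl
lemma val_two : (2 : ZMod 2).val = 0 := rfl

lemma PXZ_mul (c d c' d' : ZMod 2) :
    (PX ^ c.val * PZ ^ d.val) * (PX ^ c'.val * PZ ^ d'.val) =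
      ((-1 : ℂ) ^ (d.val * c'.val)) • (PX ^ (c + c').val * PZ ^ (d + d').val) := by
  rcases zmod2_cases c with rfl | rfl <;> rcases zmod2_cases d with rfl | rfl <;>
    rcases zmod2_cases c' with rfl | rfl <;> rcases zmod2_cases d' with rfl | rfl <;>
      (simp only [ZMod.val_zero, ZMod.val_one, val_one_one, val_two, zero_add, add_zero,
          pow_zero, pow_one, mul_zero, mul_one, zero_mul, one_mul, one_smul]
       try (ext i j
            fin_cases i <;> fin_cases j <;>
              norm_num [PX, PZ, Matrix.mul_apply, Fin.sum_univ_two, Matrix.one_apply,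
                Matrix.smul_apply]))



variable {n : ℕ}

lemma tensor_mul (f g : Fin n → Matrix (Fin 2) (Fin 2) ℂ) :
    (Matrix.of fun x y : (Fin n → Fin 2) => ∏ k, f k (x k) (y k)) *
      (Matrix.of fun x y => ∏ k, g k (x k) (y k)) =
    Matrix.of (fun x y => ∏ k, (f k * g k) (x k) (y k)) := by
  ext x y
  simp only [Matrix.mul_apply, Matrix.of_apply, ← Finset.prod_mul_distrib]
  rw [Finset.prod_univ_sum (fun _ => (univ : Finset (Fin 2)))
    (fun k a => f k (x k) a * g k a (y k)), Fintype.piFinset_univ]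

lemma prod_ite_one (P : Fin n → Prop) [DecidablePred P] :
    (∏ k, if P k then (1 : ℂ) else 0) = if ∀ k, P k then 1 else 0 := by
  by_cases h : ∀ k, P k
  · simp [h]
  · push_neg at h
    obtain ⟨k, hk⟩ := h
    rw [if_neg (by push_neg; exact ⟨k, hk⟩)]
    exact Finset.prod_eq_zero (Finset.mem_univ k) (if_neg hk)

lemma Zm_zero : Zm n 0 = 1 := by
  ext x y
  have : ∀ k, ((0 : Bits n) k : ℕ) = 0 := fun k => rfl
  simp only [Zm, Matrix.of_apply, this, pow_zero]
  rw [Matrix.one_apply]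
  have : ∀ k, (1 : Matrix (Fin 2) (Fin 2) ℂ) (x k) (y k) = if x k = y k then 1 else 0 :=
    fun k => Matrix.one_apply
  simp only [this, prod_ite_one]
  simp [funext_iff]

lemma fin2_two_val : (((1 : Fin 2) + 1 : Fin 2) : ℕ) = 0 := rfl
lemma fin2_two_val' : ((2 : Fin 2) : ℕ) = 0 := rfl

lemma PZ_sq : PZ * PZ = 1 := by
  ext i j
  fin_cases i <;> fin_cases j <;>
    norm_num [PZ, Matrix.mul_apply, Fin.sum_univ_two, Matrix.one_apply]

lemma fin2_add_pow (a b : Fin 2) : PZ ^ (a : ℕ) * PZ ^ (b : ℕ) = PZ ^ ((a + b : Fin 2) : ℕ) := by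
  rw [Fin.val_add]
  fin_cases a <;> fin_cases b <;> norm_num [PZ_sq]

lemma Zm_mul (m m' : Bits n) : Zm n m * Zm n m' = Zm n (m + m') := by
  unfold Zm
  rw [tensor_mul]
  congr 1
  ext x y
  congr 1
  ext k
  rw [fin2_add_pow]
  rfl

lemma XZ_mul (c d c' d' : Fin n → ZMod 2) :
    XZString n c d * XZString n c' d' =
      (∏ k, (-1 : ℂ) ^ ((d k).val * (c' k).val)) • XZString n (c + c') (d + d') := by
  unfold XZString
  rw [tensor_mul]
  ext x y
  simp only [Matrix.of_apply, Matrix.smul_apply, smul_eq_mul, ← Finset.prod_mul_distrib]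
  congr 1
  ext k
  rw [PXZ_mul]
  simp [Matrix.smul_apply, Pi.add_apply]

lemma XZ_zero_zero (c d : Fin n → ZMod 2) :
    XZString n c d (fun _ => 0) (fun _ => 0) = if c = 0 then 1 else 0 := by
  simp only [XZString, Matrix.of_apply, PXZ_zero_zero, prod_ite_one]
  simp [funext_iff]

lemma XZ_row (d : Fin n → ZMod 2) (y : Bits n) :
    XZString n 0 d (fun _ => 0) y = if y = (fun _ => 0) then 1 else 0 := by
  have : ∀ k, (PX ^ ((0 : Fin n → ZMod 2) k).val * PZ ^ (d k).val) 0 (y k)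
      = if y k = 0 then 1 else 0 := fun k => PXZ_zero_row (d k) (y k)
  simp only [XZString, Matrix.of_apply, this, prod_ite_one]
  simp [funext_iff]

lemma Zm_apply (m : Bits n) (x y : Bits n) :
    Zm n m x y = if x = y then ∏ k, (-1 : ℂ) ^ ((m k : ℕ) * (x k : ℕ)) else 0 := by
  simp only [Zm, Matrix.of_apply, PZ_pow_apply]
  by_cases h : x = y
  · subst h
    simp
  · obtain ⟨k, hk⟩ := Function.ne_iff.mp h
    rw [if_neg h]
    exact Finset.prod_eq_zero (Finset.mem_univ k) (if_neg hk)

lemma XZ_zero : XZString n 0 0 = (1 : Matrix (Bits n) (Bits n) ℂ) := by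
  ext x y
  simp only [XZString, Matrix.of_apply]
  have : ∀ k, (PX ^ ((0 : Fin n → ZMod 2) k).val * PZ ^ ((0 : Fin n → ZMod 2) k).val)
      (x k) (y k) = if x k = y k then 1 else 0 := by
    intro k
    simp only [Pi.zero_apply, ZMod.val_zero, pow_zero, one_mul]
    exact Matrix.one_apply
  rw [Matrix.one_apply]
  simp only [this, prod_ite_one]
  simp [funext_iff]

section main

variable {W : Matrix (Bits n) (Bits n) ℂ} {C D : Matrix (Fin n) (Fin n) (ZMod 2)}

lemma S_zero (h1 : Wᴴ * W = 1) : Wᴴ * Zm n 0 * W = 1 := by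
  rw [Zm_zero, Matrix.mul_one, h1]

lemma S_add (h2 : W * Wᴴ = 1) (m m' : Bits n) :
    Wᴴ * Zm n (m + m') * W = (Wᴴ * Zm n m * W) * (Wᴴ * Zm n m' * W) := by
  rw [← Zm_mul]
  simp only [Matrix.mul_assoc]
  rw [← Matrix.mul_assoc W Wᴴ, h2, Matrix.one_mul]

lemma fin2_cases (a : Fin 2) : a = 0 ∨ a = 1 := by fin_cases a <;> simp

lemma key (h1 : Wᴴ * W = 1) (h2 : W * Wᴴ = 1)
    (htab : ∀ i : Fin n, ∃ ε ∈ ({1, -1, Complex.I, -Complex.I} : Set ℂ),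
      Wᴴ * Zm n (fun j => if j = i then 1 else 0) * W =
        ε • XZString n (fun j => C i j) (fun j => D i j)) (m : Bits n) :
    ∃ η : ℂ, Wᴴ * Zm n m * W =
      η • XZString n (fun j => ∑ i, ((m i : ℕ) : ZMod 2) * C i j)
        (fun j => ∑ i, ((m i : ℕ) : ZMod 2) * D i j) := by
  have main : ∀ s : Finset (Fin n), ∃ η : ℂ,
      Wᴴ * Zm n (∑ i ∈ s, Pi.single i (m i)) * W =
      η • XZString n (fun j => ∑ i ∈ s, ((m i : ℕ) : ZMod 2) * C i j)
        (fun j => ∑ i ∈ s, ((m i : ℕ) : ZMod 2) * D i j) := by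
    intro s
    induction s using Finset.induction with
    | empty =>
      refine ⟨1, ?_⟩
      simp only [Finset.sum_empty]
      rw [S_zero h1, show (fun _ : Fin n => (0 : ZMod 2)) = (0 : Fin n → ZMod 2) from rfl,
        XZ_zero, one_smul]
    | @insert a s ha ih =>
      obtain ⟨η, hη⟩ := ih
      rw [Finset.sum_insert ha]
      rcases fin2_cases (m a) with h0 | h1'
      · have hc : (fun j => ∑ i ∈ insert a s, ((m i : ℕ) : ZMod 2) * C i j)
            = (fun j => ∑ i ∈ s, ((m i : ℕ) : ZMod 2) * C i j) := by
          funext j; rw [Finset.sum_insert ha, h0]; norm_num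
        have hd : (fun j => ∑ i ∈ insert a s, ((m i : ℕ) : ZMod 2) * D i j)
            = (fun j => ∑ i ∈ s, ((m i : ℕ) : ZMod 2) * D i j) := by
          funext j; rw [Finset.sum_insert ha, h0]; norm_num
        refine ⟨η, ?_⟩
        rw [hc, hd, h0, show (Pi.single a (0 : Fin 2)) = (0 : Bits n) from Pi.single_zero a,
          zero_add, hη]
      · obtain ⟨ε, _, hε⟩ := htab a
        have hc : ((fun j => C a j) + fun j => ∑ i ∈ s, ((m i : ℕ) : ZMod 2) * C i j)
            = (fun j => ∑ i ∈ insert a s, ((m i : ℕ) : ZMod 2) * C i j) := by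
          funext j; rw [Finset.sum_insert ha, h1']; simp
        have hd : ((fun j => D a j) + fun j => ∑ i ∈ s, ((m i : ℕ) : ZMod 2) * D i j)
            = (fun j => ∑ i ∈ insert a s, ((m i : ℕ) : ZMod 2) * D i j) := by
          funext j; rw [Finset.sum_insert ha, h1']; simp
        refine ⟨ε * η *
          ∏ k, (-1 : ℂ) ^ ((D a k).val * (∑ i ∈ s, ((m i : ℕ) : ZMod 2) * C i k).val), ?_⟩
        rw [S_add h2, h1',
          show (Pi.single a (1 : Fin 2)) = (fun j => if j = a then (1 : Fin 2) else 0) from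
            funext fun j => Pi.single_apply a 1 j, hε, hη,
          Matrix.smul_mul, Matrix.mul_smul, XZ_mul, smul_smul, smul_smul, hc, hd, mul_assoc]
  obtain ⟨η, hη⟩ := main Finset.univ
  exact ⟨η, by rwa [Finset.univ_sum_single m] at hη⟩

end main

/-- The sign character `(-1)^{b·m}`. -/
def ee (n : ℕ) (b m : Bits n) : ℂ := ∏ k, (-1 : ℂ) ^ ((m k : ℕ) * (b k : ℕ))

lemma fin2_add_self : ∀ a : Fin 2, a + a = 0 := by decide

lemma bits_add_self (m : Bits n) : m + m = 0 := funext fun k => fin2_add_self (m k)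

lemma ee_zero (b : Bits n) : ee n b 0 = 1 := by
  unfold ee
  have : ∀ k, ((0 : Bits n) k : ℕ) = 0 := fun _ => rfl
  simp [this]

lemma ee_add (b m m' : Bits n) : ee n b (m + m') = ee n b m * ee n b m' := by
  unfold ee
  rw [← Finset.prod_mul_distrib]
  apply Finset.prod_congr rfl
  intro k _
  have : ((m + m') k : ℕ) = ((m k : ℕ) + (m' k : ℕ)) % 2 := Fin.val_add (m k) (m' k)
  rw [this]
  rcases fin2_cases (m k) with h | h <;> rcases fin2_cases (m' k) with h' | h' <;>
    rcases fin2_cases (b k) with h'' | h'' <;> norm_num [h, h', h'']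

lemma ee_orth (b x : Bits n) :
    ∑ m : Bits n, ee n b m * ee n x m = if x = b then (2 : ℂ) ^ n else 0 := by
  unfold ee
  have hterm : ∀ m : Bits n, (∏ k, (-1 : ℂ) ^ ((m k : ℕ) * (b k : ℕ))) *
      ∏ k, (-1 : ℂ) ^ ((m k : ℕ) * (x k : ℕ)) =
      ∏ k, ((-1 : ℂ) ^ ((m k : ℕ) * (b k : ℕ)) * (-1 : ℂ) ^ ((m k : ℕ) * (x k : ℕ))) :=
    fun m => (Finset.prod_mul_distrib).symm
  simp only [hterm]
  rw [← Fintype.piFinset_univ, ← Finset.prod_univ_sum (fun _ => (univ : Finset (Fin 2)))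
    (fun k a => (-1 : ℂ) ^ ((a : ℕ) * (b k : ℕ)) * (-1 : ℂ) ^ ((a : ℕ) * (x k : ℕ)))]
  have hinner : ∀ k, (∑ a : Fin 2, (-1 : ℂ) ^ ((a : ℕ) * (b k : ℕ)) *
      (-1 : ℂ) ^ ((a : ℕ) * (x k : ℕ))) = if x k = b k then 2 else 0 := by
    intro k
    rw [Fin.sum_univ_two]
    rcases fin2_cases (b k) with h | h <;> rcases fin2_cases (x k) with h' | h' <;>
      norm_num [h, h']
  simp only [hinner]
  by_cases h : x = b
  · subst h
    simp
  · rw [if_neg h]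
    obtain ⟨k, hk⟩ := Function.ne_iff.mp h
    exact Finset.prod_eq_zero (Finset.mem_univ k) (if_neg hk)

lemma char_sum (K : Finset (Bits n)) (χ : Bits n → ℂ)
    (hmul : ∀ m ∈ K, ∀ m' ∈ K, χ (m + m') = χ m * χ m')
    (hclosed : ∀ m ∈ K, ∀ m' ∈ K, m + m' ∈ K)
    (hχ0 : χ 0 = 1) :
    ∑ m ∈ K, χ m = K.card ∨ ∑ m ∈ K, χ m = 0 := by
  by_cases hall : ∀ m ∈ K, χ m = 1
  · left
    rw [Finset.sum_congr rfl hall]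
    simp
  · right
    push_neg at hall
    obtain ⟨m₀, hm₀K, hm₀⟩ := hall
    have hsq : χ m₀ * χ m₀ = 1 := by
      rw [← hmul m₀ hm₀K m₀ hm₀K, bits_add_self, hχ0]
    have hneg : χ m₀ = -1 := by
      rcases mul_self_eq_one_iff.mp hsq with h | h
      · exact absurd h hm₀
      · exact h
    have hre : ∑ m ∈ K, χ (m₀ + m) = ∑ m ∈ K, χ m := by
      apply Finset.sum_nbij' (fun m => m₀ + m) (fun m => m₀ + m)
      · intro a ha
        exact hclosed m₀ hm₀K a ha
      · intro a ha
        exact hclosed m₀ hm₀K a ha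
      · intro a _
        rw [← add_assoc, bits_add_self, zero_add]
      · intro a _
        rw [← add_assoc, bits_add_self, zero_add]
      · intro a _
        rfl
    have hre2 : ∑ m ∈ K, χ (m₀ + m) = -∑ m ∈ K, χ m := by
      rw [Finset.sum_congr rfl fun m hm => hmul m₀ hm₀K m hm]
      simp only [hneg, neg_one_mul, Finset.sum_neg_distrib]
    have : ∑ m ∈ K, χ m = -∑ m ∈ K, χ m := hre.symm.trans hre2
    have h2 : (2 : ℂ) * ∑ m ∈ K, χ m = 0 := by linear_combination this
    have := mul_eq_zero.mp h2
    simpa using this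

lemma ker_card (C : Matrix (Fin n) (Fin n) (ZMod 2)) :
    (Finset.univ.filter fun m : Bits n =>
      ∀ j, ∑ i, ((m i : ℕ) : ZMod 2) * C i j = 0).card = 2 ^ (n - C.rank) ∧ C.rank ≤ n := by
  have hrle : C.rank ≤ n := by
    simpa using C.rank_le_card_width
  refine ⟨?_, hrle⟩
  -- transfer to the ZMod 2 vector space
  have hcard : (Finset.univ.filter fun m : Bits n =>
      ∀ j, ∑ i, ((m i : ℕ) : ZMod 2) * C i j = 0).card =
      (Finset.univ.filter fun v : Fin n → ZMod 2 => Cᵀ.mulVec v = 0).card := by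
    apply Finset.card_nbij' (fun m i => ((m i : ℕ) : ZMod 2))
      (fun v i => if v i = 0 then (0 : Fin 2) else 1)
    · intro m hm
      simp only [Finset.mem_coe, Finset.mem_filter, Finset.mem_univ, true_and] at hm ⊢
      funext j
      rw [Matrix.mulVec, dotProduct]
      simp only [Matrix.transpose_apply, Pi.zero_apply]
      rw [← hm j]
      exact Finset.sum_congr rfl fun i _ => mul_comm _ _
    · intro v hv
      simp only [Finset.mem_coe, Finset.mem_filter, Finset.mem_univ, true_and] at hv ⊢
      intro j
      have : ∀ i : Fin n, ((((if v i = 0 then (0 : Fin 2) else 1) : Fin 2) : ℕ) : ZMod 2) = v i := by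
        intro i
        rcases zmod2_cases (v i) with h | h <;> simp [h]
      simp only [this]
      have := congrFun hv j
      rw [Matrix.mulVec, dotProduct] at this
      simp only [Matrix.transpose_apply, Pi.zero_apply] at this
      rw [← this]
      exact Finset.sum_congr rfl fun i _ => mul_comm _ _
    · intro m hm
      funext i
      rcases fin2_cases (m i) with h | h <;> simp [h]
    · intro v hv
      funext i
      rcases zmod2_cases (v i) with h | h <;> simp [h]
  rw [hcard]
  haveI : Fintype ↥(LinearMap.ker (Cᵀ.mulVecLin)) := Fintype.ofFinite _
  have hsub : (Finset.univ.filter fun v : Fin n → ZMod 2 => Cᵀ.mulVec v = 0).card =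
      Fintype.card (LinearMap.ker (Cᵀ.mulVecLin)) := by
    rw [← Fintype.card_subtype]
    apply Fintype.card_congr
    apply Equiv.subtypeEquivRight
    intro v
    rw [LinearMap.mem_ker, Matrix.mulVecLin_apply]
  rw [hsub]
  have hker : Fintype.card (LinearMap.ker (Cᵀ.mulVecLin)) =
      Fintype.card (ZMod 2) ^ Module.finrank (ZMod 2) (LinearMap.ker (Cᵀ.mulVecLin)) :=
    Module.card_eq_pow_finrank
  have hrank : Cᵀ.rank = Module.finrank (ZMod 2) (LinearMap.range (Cᵀ.mulVecLin)) := rfl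
  have hrn : Module.finrank (ZMod 2) (LinearMap.range (Cᵀ.mulVecLin)) +
      Module.finrank (ZMod 2) (LinearMap.ker (Cᵀ.mulVecLin)) = n := by
    rw [LinearMap.finrank_range_add_finrank_ker (Cᵀ.mulVecLin),
      Module.finrank_fintype_fun_eq_card, Fintype.card_fin]
  have htr : Cᵀ.rank = C.rank := Matrix.rank_transpose C
  rw [← hrank, htr] at hrn
  have hfin : Module.finrank (ZMod 2) (LinearMap.ker (Cᵀ.mulVecLin)) = n - C.rank := by
    exact Nat.eq_sub_of_add_eq' hrn
  rw [hker, hfin, ZMod.card]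

lemma fourier (W : Matrix (Bits n) (Bits n) ℂ) (b : Bits n) :
    ∑ m : Bits n, ee n b m * (Wᴴ * Zm n m * W) (fun _ => 0) (fun _ => 0) =
      (2 : ℂ) ^ n * ((starRingEnd ℂ) (W b (fun _ => 0)) * W b (fun _ => 0)) := by
  have h1 : ∀ (m : Bits n) (y : Bits n), (Wᴴ * Zm n m) (fun _ => 0) y =
      (starRingEnd ℂ) (W y (fun _ => 0)) * ee n y m := by
    intro m y
    rw [Matrix.mul_apply]
    simp only [Matrix.conjTranspose_apply, Zm_apply, mul_ite, mul_zero, starRingEnd_apply]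
    rw [Finset.sum_ite_eq' Finset.univ y
      (fun x => star (W x (fun _ => 0)) * ∏ k, (-1 : ℂ) ^ ((m k : ℕ) * (x k : ℕ)))]
    simp only [Finset.mem_univ, if_true]
    rfl
  have hS : ∀ m : Bits n, (Wᴴ * Zm n m * W) (fun _ => 0) (fun _ => 0) =
      ∑ x : Bits n, (starRingEnd ℂ) (W x (fun _ => 0)) * W x (fun _ => 0) * ee n x m := by
    intro m
    rw [Matrix.mul_apply]
    apply Finset.sum_congr rfl
    intro y _
    rw [h1 m y]
    ring
  simp only [hS, Finset.mul_sum]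
  rw [Finset.sum_comm]
  have h2 : ∀ x : Bits n, (∑ m : Bits n, ee n b m *
      ((starRingEnd ℂ) (W x (fun _ => 0)) * W x (fun _ => 0) * ee n x m)) =
      (starRingEnd ℂ) (W x (fun _ => 0)) * W x (fun _ => 0) *
        ∑ m : Bits n, ee n b m * ee n x m := by
    intro x
    rw [Finset.mul_sum]
    apply Finset.sum_congr rfl
    intro m _
    ring
  simp only [h2, ee_orth, mul_ite, mul_zero]
  rw [Finset.sum_ite_eq' Finset.univ b
    (fun x => (starRingEnd ℂ) (W x (fun _ => 0)) * W x (fun _ => 0) * (2 : ℂ) ^ n)]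
  simp only [Finset.mem_univ, if_true]
  ring

end S15


lemma fin2_cast_add : ∀ a b : Fin 2,
    (((a + b : Fin 2) : ℕ) : ZMod 2) = ((a : ℕ) : ZMod 2) + ((b : ℕ) : ZMod 2) := by decide

/-- if the Z-Tableau of `W = UV†` is `[C, D]`, i.e.
`W† Z_i W = (phase) · ∏_j X_j^{C_{ij}} Z_j^{D_{ij}}`, and `r = rank_{𝔽₂} C`, then the
distribution `b ↦ α_b = |⟨b|W|0⟩|²` takes the value `2^{-r}` on exactly `2^r` strings
`b`, and `0` on the remaining `2^n − 2^r` strings. -/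
theorem stmt15 (n : ℕ) (W : Matrix (Bits n) (Bits n) ℂ)
    (hW : Wᴴ * W = 1 ∧ W * Wᴴ = 1)
    (C D : Matrix (Fin n) (Fin n) (ZMod 2))
    (htab : ∀ i : Fin n, ∃ ε ∈ ({1, -1, Complex.I, -Complex.I} : Set ℂ),
      Wᴴ * Zm n (fun j => if j = i then 1 else 0) * W =
        ε • XZString n (fun j => C i j) (fun j => D i j)) :
    ((Finset.univ.filter fun b : Bits n =>
        ‖W b (fun _ => 0)‖ ^ 2 = ((2 : ℝ) ^ C.rank)⁻¹).card = 2 ^ C.rank)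
    ∧ ∀ b : Bits n,
        ‖W b (fun _ => 0)‖ ^ 2 = ((2 : ℝ) ^ C.rank)⁻¹ ∨
          ‖W b (fun _ => 0)‖ ^ 2 = 0 := by
  classical
  obtain ⟨h1, h2⟩ := hW
  set r := C.rank with hrdef
  set z0 : Bits n := (fun _ => 0) with hz0
  set K : Finset (Bits n) := Finset.univ.filter
    (fun m : Bits n => ∀ j, ∑ i, ((m i : ℕ) : ZMod 2) * C i j = 0) with hKdef
  obtain ⟨hKcard, hrle⟩ := S15.ker_card C
  set g : Bits n → ℂ := fun m => (Wᴴ * Zm n m * W) z0 z0 with hgdef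
  -- off-kernel vanishing
  have F1 : ∀ m : Bits n, m ∉ K → g m = 0 := by
    intro m hm
    rw [hKdef, Finset.mem_filter] at hm
    push_neg at hm
    have hm' := hm (Finset.mem_univ m)
    obtain ⟨η, hη⟩ := S15.key h1 h2 htab m
    have hcne : (fun j => ∑ i, ((m i : ℕ) : ZMod 2) * C i j) ≠ 0 := by
      intro hc
      obtain ⟨j, hj⟩ := hm'
      exact hj (congrFun hc j)
    rw [hgdef]
    simp only [hη, Matrix.smul_apply, smul_eq_mul, hz0]
    rw [S15.XZ_zero_zero, if_neg hcne, mul_zero]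
  -- value at zero
  have F3 : g 0 = 1 := by
    rw [hgdef]
    simp only [S15.S_zero h1]
    exact Matrix.one_apply_eq z0
  -- multiplicativity on the kernel
  have F2 : ∀ m ∈ K, ∀ m' : Bits n, g (m + m') = g m * g m' := by
    intro m hm m'
    rw [hKdef, Finset.mem_filter] at hm
    obtain ⟨η, hη⟩ := S15.key h1 h2 htab m
    have hc : (fun j => ∑ i, ((m i : ℕ) : ZMod 2) * C i j) = 0 :=
      funext fun j => hm.2 j
    rw [hc] at hη
    have hrow : ∀ y, (Wᴴ * Zm n m * W) z0 y = η * (if y = z0 then 1 else 0) := by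
      intro y
      rw [hη]
      simp only [Matrix.smul_apply, smul_eq_mul, hz0]
      rw [S15.XZ_row]
    have hgm : g m = η := by
      show (Wᴴ * Zm n m * W) z0 z0 = η
      rw [hrow z0, if_pos rfl, mul_one]
    show (Wᴴ * Zm n (m + m') * W) z0 z0 = g m * g m'
    rw [S15.S_add h2 m m', Matrix.mul_apply]
    have hterm : ∀ y : Bits n, (Wᴴ * Zm n m * W) z0 y * (Wᴴ * Zm n m' * W) y z0 =
        (if y = z0 then η * (Wᴴ * Zm n m' * W) y z0 else 0) := by
      intro y
      rw [hrow y]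
      by_cases hy : y = z0
      · rw [if_pos hy, if_pos hy, mul_one]
      · rw [if_neg hy, if_neg hy, mul_zero, zero_mul]
    rw [Finset.sum_congr rfl fun y _ => hterm y,
      Finset.sum_ite_eq' Finset.univ z0 (fun y => η * (Wᴴ * Zm n m' * W) y z0),
      if_pos (Finset.mem_univ z0), hgm]
  -- kernel closed under addition, contains zero
  have F5 : ∀ m ∈ K, ∀ m' ∈ K, m + m' ∈ K := by
    intro m hm m' hm'
    rw [hKdef, Finset.mem_filter] at hm hm' ⊢
    refine ⟨Finset.mem_univ _, fun j => ?_⟩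
    have : ∀ i : Fin n, ((((m + m') i : Fin 2) : ℕ) : ZMod 2) * C i j =
        ((m i : ℕ) : ZMod 2) * C i j + ((m' i : ℕ) : ZMod 2) * C i j := by
      intro i
      rw [show (m + m') i = m i + m' i from rfl, fin2_cast_add, add_mul]
    rw [Finset.sum_congr rfl fun i _ => this i, Finset.sum_add_distrib, hm.2 j, hm'.2 j,
      add_zero]
  -- per-b dichotomy in ℂ
  have hdich : ∀ b : Bits n, (2 : ℂ) ^ n * ((starRingEnd ℂ) (W b z0) * W b z0) = K.card ∨
      (2 : ℂ) ^ n * ((starRingEnd ℂ) (W b z0) * W b z0) = 0 := by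
    intro b
    have hsplit : ∑ m : Bits n, S15.ee n b m * g m = ∑ m ∈ K, S15.ee n b m * g m := by
      rw [eq_comm]
      apply Finset.sum_subset (Finset.filter_subset _ _)
      intro m _ hm
      rw [F1 m hm, mul_zero]
    have hchar := S15.char_sum K (fun m => S15.ee n b m * g m)
      (fun m hm m' hm' => by rw [S15.ee_add, F2 m hm m']; ring)
      F5
      (by rw [S15.ee_zero, F3, one_mul])
    rw [← S15.fourier W b, hsplit]
    exact_mod_cast hchar
  -- translate to |·|² values
  have habs : ∀ z : ℂ, ((‖z‖ ^ 2 : ℝ) : ℂ) = (starRingEnd ℂ) z * z := by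
    intro z
    rw [Complex.sq_norm]
    exact Complex.normSq_eq_conj_mul_self
  have h2r : ((2 : ℂ) ^ r) ≠ 0 := pow_ne_zero _ two_ne_zero
  have h2n : ((2 : ℂ) ^ n) ≠ 0 := pow_ne_zero _ two_ne_zero
  have hpow : (2 : ℂ) ^ (n - r) * 2 ^ r = 2 ^ n := pow_sub_mul_pow 2 hrle
  have val : ∀ b : Bits n,
      ‖W b z0‖ ^ 2 = ((2 : ℝ) ^ r)⁻¹ ∨ ‖W b z0‖ ^ 2 = 0 := by
    intro b
    rcases hdich b with h | h
    · left
      have hXc : ((‖W b z0‖ ^ 2 : ℝ) : ℂ) = ((2 : ℂ) ^ r)⁻¹ := by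
        rw [habs]
        apply mul_left_cancel₀ h2n
        rw [h, hKcard]
        push_cast
        rw [← hpow, mul_inv_cancel_right₀ h2r]
      have hcast : ((((2 : ℝ) ^ r)⁻¹ : ℝ) : ℂ) = ((2 : ℂ) ^ r)⁻¹ := by
        push_cast
        ring
      exact Complex.ofReal_inj.mp (hXc.trans hcast.symm)
    · right
      have hXc : ((‖W b z0‖ ^ 2 : ℝ) : ℂ) = 0 := by
        rw [habs]
        rcases mul_eq_zero.mp h with h' | h'
        · exact absurd h' h2n
        · exact h'
      exact Complex.ofReal_inj.mp (hXc.trans Complex.ofReal_zero.symm)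
  refine ⟨?_, val⟩
  -- counting via normalization
  have hsum1 : ∑ b : Bits n, ‖W b z0‖ ^ 2 = 1 := by
    have hc : (((∑ b : Bits n, ‖W b z0‖ ^ 2 : ℝ)) : ℂ) = 1 := by
      rw [Complex.ofReal_sum]
      simp only [habs]
      have : ∑ b : Bits n, (starRingEnd ℂ) (W b z0) * W b z0 = (Wᴴ * W) z0 z0 := by
        rw [Matrix.mul_apply]
        exact Finset.sum_congr rfl fun x _ => rfl
      rw [this, h1, Matrix.one_apply_eq]
    exact_mod_cast hc
  set p : Bits n → Prop := fun b => ‖W b z0‖ ^ 2 = ((2 : ℝ) ^ r)⁻¹ with hp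
  have hsplit := Finset.sum_filter_add_sum_filter_not Finset.univ p
    (fun b => ‖W b z0‖ ^ 2)
  have hA : ∑ b ∈ Finset.univ.filter p, ‖W b z0‖ ^ 2 =
      (Finset.univ.filter p).card * ((2 : ℝ) ^ r)⁻¹ := by
    rw [Finset.sum_congr rfl fun b hb => (Finset.mem_filter.mp hb).2]
    rw [Finset.sum_const, nsmul_eq_mul]
  have hB : ∑ b ∈ Finset.univ.filter (fun b => ¬ p b), ‖W b z0‖ ^ 2 = 0 := by
    apply Finset.sum_eq_zero
    intro b hb
    have hb' := (Finset.mem_filter.mp hb).2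
    rcases val b with h | h
    · exact absurd h hb'
    · exact h
  rw [hA, hB, add_zero, hsum1] at hsplit
  have h2rR : ((2 : ℝ) ^ r) ≠ 0 := pow_ne_zero _ two_ne_zero
  have hcount : ((Finset.univ.filter p).card : ℝ) = 2 ^ r := by
    field_simp at hsplit
    exact hsplit
  have hfin : ((Finset.univ.filter p).card : ℝ) = ((2 ^ r : ℕ) : ℝ) := by
    rw [hcount]
    push_cast
    ring
  exact Nat.cast_inj.mp hfin
end
end

section
/- Let P be a nontrivial n-qubit Pauli and suppose there exist a Clifford V and nonzero m ∈ {0,1}^n with V† Z_m V = P, where Z_m = ⊗_i Z^{m_i}. Then for the MUB ensemble {U} whose stabilizer groups partition the nontrivial Paulis, the shadow-estimation second moment for O = P equals Σ_{U,b} (2^n+1) ⟨b|UPU†|b⟩² ⟨b|Uρ U†|b⟩ = 2^n + 1 for every density matrix ρ; in particular ⟨b|U P U†|b⟩ ∈ {0, ±1}, being ±1 only for the unique MUB element U = V containing P in its stabilizer group and 0 for all others. -/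
/-!
For every `U`, the diagonal of `U P U†` in the computational basis is the Fourier transform
over `m ∈ {0,1}^n` of the traces `tr (Z_m U P U†) = tr (U† Z_m U P)`. At the ensemble
element `V` we have `V P V† = Z_{m₀}`, whose diagonal entries are `±1`. For any other element
`U`, each `U† Z_m U` is a phase times a Pauli string (Clifford property); it is
trace-orthogonal to `P` unless it equals `±P`, which the partition property forbids, so the
diagonal of `U P U†` vanishes. The second moment therefore collapses to `(2^n + 1) tr ρ`.
-/

open Matrix Finset
open scoped ComplexOrder

noncomputable section

lemma Matrix.mul_mul_conjTranspose_eq_of_conjTranspose_mul_mul_eq {ι R : Type*} [Fintype ι]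
    [DecidableEq ι] [Semiring R] [Star R] {U A B : Matrix ι ι R} (hU : U * Uᴴ = 1)
    (h : Uᴴ * A * U = B) : U * B * Uᴴ = A := by
  calc U * B * Uᴴ = U * Uᴴ * A * (U * Uᴴ) := by simp only [← h, Matrix.mul_assoc]
    _ = A := by rw [hU, Matrix.one_mul, Matrix.mul_one]

lemma Fintype.prod_ite_eq_ite_pow {ι κ M : Type*} [Fintype ι] [DecidableEq κ]
    [CommMonoidWithZero M] [DecidableEq (ι → κ)] (f g : ι → κ) (c : M) :
    ∏ i, (if f i = g i then c else 0) = if f = g then c ^ Fintype.card ι else 0 := by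
  split_ifs with h
  · simp [h]
  · obtain ⟨i, hi⟩ := Function.ne_iff.mp h
    exact prod_eq_zero (mem_univ i) (if_neg hi)

section Zm

variable {n : ℕ}

lemma PZ_pow_apply_of_ne (m : Fin 2) {s t : Fin 2} (h : s ≠ t) : (PZ ^ (m : ℕ)) s t = 0 := by
  fin_cases m <;> fin_cases s <;> fin_cases t <;> simp_all [PZ]

lemma PZ_pow_apply_self_mul_self (m s : Fin 2) :
    (PZ ^ (m : ℕ)) s s * (PZ ^ (m : ℕ)) s s = 1 := by
  fin_cases m <;> fin_cases s <;> simp [PZ]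

lemma sum_PZ_pow_apply_self_mul (s t : Fin 2) :
    ∑ m : Fin 2, (PZ ^ (m : ℕ)) s s * (PZ ^ (m : ℕ)) t t = if s = t then 2 else 0 := by
  fin_cases s <;> fin_cases t <;> simp [PZ, Fin.sum_univ_two] <;> norm_num

lemma PZ_pow_eq_P1 (s : Fin 2) : PZ ^ (s : ℕ) = P1 (if s = 0 then 0 else 3) := by
  fin_cases s <;> simp [PZ, P1, Matrix.one_fin_two]

lemma Zm_apply_of_ne (m : Bits n) {x y : Bits n} (h : x ≠ y) : Zm n m x y = 0 := by
  obtain ⟨k, hk⟩ := Function.ne_iff.mp h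
  exact prod_eq_zero (mem_univ k) (PZ_pow_apply_of_ne _ hk)

lemma Zm_eq_diagonal (m : Bits n) : Zm n m = diagonal fun x => Zm n m x x := by
  ext x y
  by_cases h : x = y
  · simp [h]
  · rw [diagonal_apply_ne _ h, Zm_apply_of_ne m h]

lemma Zm_zero : Zm n 0 = 1 := by
  rw [Zm_eq_diagonal]
  simp [Zm]

lemma Zm_apply_self_eq_one_or_eq_neg_one (m x : Bits n) :
    Zm n m x x = 1 ∨ Zm n m x x = -1 :=
  mul_self_eq_one_iff.mp <| by
    simp only [Zm, of_apply, ← prod_mul_distrib, PZ_pow_apply_self_mul_self, prod_const_one]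

lemma Zm_eq_PString (m : Bits n) : Zm n m = PString n fun k => if m k = 0 then 0 else 3 := by
  ext x y
  simp only [Zm, PString, of_apply, PZ_pow_eq_P1]

lemma sum_Zm_apply_self_mul (x y : Bits n) :
    ∑ m : Bits n, Zm n m x x * Zm n m y y = if x = y then 2 ^ n else 0 := by
  simp only [Zm, of_apply, ← prod_mul_distrib]
  rw [← Fintype.prod_sum fun k (s : Fin 2) =>
    (PZ ^ (s : ℕ)) (x k) (x k) * (PZ ^ (s : ℕ)) (y k) (y k)]
  simp only [sum_PZ_pow_apply_self_mul, Fintype.prod_ite_eq_ite_pow, Fintype.card_fin]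

lemma sum_Zm_apply_self_mul_trace (M : Matrix (Bits n) (Bits n) ℂ) (x : Bits n) :
    ∑ m : Bits n, Zm n m x x * trace (Zm n m * M) = 2 ^ n * M x x := by
  have htrace (m : Bits n) : trace (Zm n m * M) = ∑ y, Zm n m y y * M y y := by
    rw [Zm_eq_diagonal m]
    simp [trace, diagonal_mul]
  simp only [htrace, mul_sum, ← mul_assoc]
  rw [sum_comm]
  simp only [← sum_mul, sum_Zm_apply_self_mul, ite_mul, zero_mul, sum_ite_eq, mem_univ, if_true]

lemma diag_eq_zero_of_trace_Zm_mul_eq_zero {M : Matrix (Bits n) (Bits n) ℂ}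
    (h : ∀ m, trace (Zm n m * M) = 0) (x : Bits n) : M x x = 0 := by
  have := sum_Zm_apply_self_mul_trace M x
  simp only [h, mul_zero, sum_const_zero] at this
  exact (mul_eq_zero.mp this.symm).resolve_left (pow_ne_zero _ two_ne_zero)

end Zm

section Pauli

variable {n : ℕ}

lemma P1_zero : P1 0 = 1 := one_fin_two.symm

lemma P1_isHermitian (i : Fin 4) : (P1 i).IsHermitian := by
  fin_cases i <;> ext s t <;> fin_cases s <;> fin_cases t <;> simp [P1]

lemma trace_P1_mul (i j : Fin 4) : trace (P1 i * P1 j) = if i = j then 2 else 0 := by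
  fin_cases i <;> fin_cases j <;> simp [P1, trace, Fin.sum_univ_two] <;> ring_nf

lemma trace_PString_mul (a a' : Fin n → Fin 4) :
    trace (PString n a * PString n a') = if a = a' then 2 ^ n else 0 := by
  calc trace (PString n a * PString n a')
      = ∑ x : Bits n, ∑ y : Bits n, ∏ k, (P1 (a k) (x k) (y k) * P1 (a' k) (y k) (x k)) := by
        simp only [trace, Matrix.diag, mul_apply, PString, of_apply, prod_mul_distrib]
    _ = ∑ x : Bits n, ∏ k, ∑ t : Fin 2, P1 (a k) (x k) t * P1 (a' k) t (x k) := by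
        congr! with x
        exact (Fintype.prod_sum fun k (t : Fin 2) => P1 (a k) (x k) t * P1 (a' k) t (x k)).symm
    _ = ∏ k, ∑ s : Fin 2, ∑ t : Fin 2, P1 (a k) s t * P1 (a' k) t s :=
        (Fintype.prod_sum fun k (s : Fin 2) => ∑ t, P1 (a k) s t * P1 (a' k) t s).symm
    _ = ∏ k, trace (P1 (a k) * P1 (a' k)) := by simp only [trace, Matrix.diag, mul_apply]
    _ = if a = a' then 2 ^ n else 0 := by
        simp only [trace_P1_mul, Fintype.prod_ite_eq_ite_pow, Fintype.card_fin]

lemma PString_zero : PString n 0 = 1 := by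
  ext x y
  simp only [PString, of_apply, Pi.zero_apply, P1_zero, one_apply, Fintype.prod_ite_eq_ite_pow,
    one_pow]

lemma PString_isHermitian (a : Fin n → Fin 4) : (PString n a).IsHermitian := by
  ext x y
  simp only [conjTranspose_apply, PString, of_apply, star_prod, (P1_isHermitian _).apply]

lemma PString_ne_zero (a : Fin n → Fin 4) : PString n a ≠ 0 := fun h =>
  pow_ne_zero n two_ne_zero (by simpa [h] using (trace_PString_mul a a).symm : (2 : ℂ) ^ n = 0)

lemma Zm_isHermitian (m : Bits n) : (Zm n m).IsHermitian :=
  Zm_eq_PString m ▸ PString_isHermitian _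

lemma eq_one_or_eq_neg_one_of_isHermitian_smul_PString {c : ℂ}
    (hc : c ∈ ({1, -1, Complex.I, -Complex.I} : Set ℂ)) {a : Fin n → Fin 4}
    (h : (c • PString n a).IsHermitian) : c = 1 ∨ c = -1 := by
  have hreal : star c = c := by
    refine smul_left_injective ℂ (PString_ne_zero a) ?_
    simpa [IsHermitian, conjTranspose_smul, (PString_isHermitian a).eq] using h
  rcases hc with rfl | rfl | rfl | rfl
  · exact .inl rfl
  · exact .inr rfl
  all_goals norm_num [Complex.ext_iff] at hreal

end Pauli

lemma IsClifford.exists_conj_Zm_eq_smul_PString {n : ℕ} {U : Matrix (Bits n) (Bits n) ℂ}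
    (hU : IsClifford n U) (m : Bits n) :
    ∃ c ∈ ({1, -1, Complex.I, -Complex.I} : Set ℂ),
      ∃ a' : Fin n → Fin 4, Uᴴ * Zm n m * U = c • PString n a' := by
  rw [Zm_eq_PString]
  exact hU _

lemma diag_conj_PString_eq_zero {n : ℕ} {U : Matrix (Bits n) (Bits n) ℂ} (hU : Uᴴ * U = 1)
    (hUC : IsClifford n U) {a : Fin n → Fin 4} (ha : a ≠ 0)
    (hstab : ∀ m ≠ 0, Uᴴ * Zm n m * U ≠ PString n a ∧ Uᴴ * Zm n m * U ≠ -PString n a)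
    (b : Bits n) : (U * PString n a * Uᴴ) b b = 0 := by
  refine diag_eq_zero_of_trace_Zm_mul_eq_zero (fun m => ?_) b
  have hcycle :
      trace (Zm n m * (U * PString n a * Uᴴ)) = trace (Uᴴ * Zm n m * U * PString n a) := by
    rw [← Matrix.mul_assoc, ← Matrix.mul_assoc, trace_mul_cycle]
    simp only [Matrix.mul_assoc]
  rw [hcycle]
  by_cases hm : m = 0
  · rw [hm, Zm_zero, Matrix.mul_one, hU, ← PString_zero, trace_PString_mul, if_neg ha.symm]
  obtain ⟨c, hc, a', hca'⟩ := hUC.exists_conj_Zm_eq_smul_PString m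
  rw [hca', smul_mul, trace_smul, trace_PString_mul, if_neg, smul_zero]
  rintro rfl
  have hherm : (c • PString n a').IsHermitian :=
    hca' ▸ isHermitian_conjTranspose_mul_mul U (Zm_isHermitian m)
  rcases eq_one_or_eq_neg_one_of_isHermitian_smul_PString hc hherm with rfl | rfl
  · exact (hstab m hm).1 (by rw [hca', one_smul])
  · exact (hstab m hm).2 (by rw [hca', neg_one_smul])

theorem stmt16_general (n : ℕ) (ι : Type) [Fintype ι]
    (U : ι → Matrix (Bits n) (Bits n) ℂ)
    (hU : ∀ u, (U u)ᴴ * U u = 1 ∧ U u * (U u)ᴴ = 1)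
    (hUC : ∀ u, IsClifford n (U u))
    (hcover : ∀ a : Fin n → Fin 4, a ≠ (fun _ => 0) →
      ∃! q : ι × Bits n, q.2 ≠ (fun _ => 0) ∧
        ((U q.1)ᴴ * Zm n q.2 * U q.1 = PString n a ∨
          (U q.1)ᴴ * Zm n q.2 * U q.1 = -(PString n a)))
    (a : Fin n → Fin 4) (ha : a ≠ (fun _ => 0))
    (u₀ : ι) (m₀ : Bits n) (hm₀ : m₀ ≠ (fun _ => 0))
    (hst : (U u₀)ᴴ * Zm n m₀ * U u₀ = PString n a)
    (ρ : Matrix (Bits n) (Bits n) ℂ) (hρtr : ρ.trace = 1) :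
    (∑ u : ι, ∑ b : Bits n, ((2 : ℂ) ^ n + 1) *
        ((U u * PString n a * (U u)ᴴ) b b) ^ 2 * ((U u * ρ * (U u)ᴴ) b b)
      = (2 : ℂ) ^ n + 1)
    ∧ (∀ u : ι, ∀ b : Bits n,
        (U u * PString n a * (U u)ᴴ) b b = 0 ∨
        (U u * PString n a * (U u)ᴴ) b b = 1 ∨
        (U u * PString n a * (U u)ᴴ) b b = -1)
    ∧ (∀ u : ι, u ≠ u₀ → ∀ b : Bits n, (U u * PString n a * (U u)ᴴ) b b = 0)
    ∧ (∀ b : Bits n,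
        (U u₀ * PString n a * (U u₀)ᴴ) b b = 1 ∨
        (U u₀ * PString n a * (U u₀)ᴴ) b b = -1) := by
  have hdiag₀ (b : Bits n) : (U u₀ * PString n a * (U u₀)ᴴ) b b = 1 ∨
      (U u₀ * PString n a * (U u₀)ᴴ) b b = -1 := by
    rw [mul_mul_conjTranspose_eq_of_conjTranspose_mul_mul_eq (hU u₀).2 hst]
    exact Zm_apply_self_eq_one_or_eq_neg_one m₀ b
  have hdiag (u : ι) (hu : u ≠ u₀) (b : Bits n) : (U u * PString n a * (U u)ᴴ) b b = 0 := by
    refine diag_conj_PString_eq_zero (hU u).1 (hUC u) ha (fun m hm => ?_) b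
    obtain ⟨q, -, huniq⟩ := hcover a ha
    have hq₀ := huniq (u₀, m₀) ⟨hm₀, .inl hst⟩
    refine ⟨fun h => hu ?_, fun h => hu ?_⟩ <;>
      exact congrArg Prod.fst ((huniq (u, m) ⟨hm, by tauto⟩).trans hq₀.symm)
  refine ⟨?_, fun u b => ?_, hdiag, hdiag₀⟩
  · rw [Fintype.sum_eq_single u₀ fun u hu => sum_eq_zero fun b _ => by simp [hdiag u hu b]]
    calc _ = ((2 : ℂ) ^ n + 1) * trace (U u₀ * ρ * (U u₀)ᴴ) := by
          rw [trace, mul_sum]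
          refine sum_congr rfl fun b _ => ?_
          rcases hdiag₀ b with h | h <;> simp [h]
      _ = (2 : ℂ) ^ n + 1 := by rw [trace_mul_cycle, (hU u₀).1, Matrix.one_mul, hρtr, mul_one]
  · by_cases hu : u = u₀
    · subst hu
      exact .inr (hdiag₀ b)
    · exact .inl (hdiag u hu b)

/-- for a nontrivial Pauli `P` belonging (via `V† Z_{m₀} V = P`) to the
stabilizer group of the MUB element `V = U u₀` of a stabilizer MUB ensemble whose
stabilizer groups partition the nontrivial Paulis, the shadow second moment for `O = P`
equals `2^n + 1` for every density matrix `ρ`; moreover `⟨b|UPU†|b⟩ ∈ {0, ±1}`, being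
`±1` only for the unique MUB element `u₀` and `0` for all other elements. -/
theorem stmt16 (n : ℕ) (ι : Type) [Fintype ι] (hι : Fintype.card ι = 2 ^ n + 1)
    (U : ι → Matrix (Bits n) (Bits n) ℂ)
    (hU : ∀ u, (U u)ᴴ * U u = 1 ∧ U u * (U u)ᴴ = 1)
    (hUC : ∀ u, IsClifford n (U u))
    (hcover : ∀ a : Fin n → Fin 4, a ≠ (fun _ => 0) →
      ∃! q : ι × Bits n, q.2 ≠ (fun _ => 0) ∧
        ((U q.1)ᴴ * Zm n q.2 * U q.1 = PString n a ∨
          (U q.1)ᴴ * Zm n q.2 * U q.1 = -(PString n a)))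
    (a : Fin n → Fin 4) (ha : a ≠ (fun _ => 0))
    (u₀ : ι) (m₀ : Bits n) (hm₀ : m₀ ≠ (fun _ => 0))
    (hst : (U u₀)ᴴ * Zm n m₀ * U u₀ = PString n a)
    (ρ : Matrix (Bits n) (Bits n) ℂ) (hρ : ρ.PosSemidef) (hρtr : ρ.trace = 1) :
    (∑ u : ι, ∑ b : Bits n, ((2 : ℂ) ^ n + 1) *
        ((U u * PString n a * (U u)ᴴ) b b) ^ 2 * ((U u * ρ * (U u)ᴴ) b b)
      = (2 : ℂ) ^ n + 1)
    ∧ (∀ u : ι, ∀ b : Bits n,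
        (U u * PString n a * (U u)ᴴ) b b = 0 ∨
        (U u * PString n a * (U u)ᴴ) b b = 1 ∨
        (U u * PString n a * (U u)ᴴ) b b = -1)
    ∧ (∀ u : ι, u ≠ u₀ → ∀ b : Bits n, (U u * PString n a * (U u)ᴴ) b b = 0)
    ∧ (∀ b : Bits n,
        (U u₀ * PString n a * (U u₀)ᴴ) b b = 1 ∨
        (U u₀ * PString n a * (U u₀)ᴴ) b b = -1) :=
  stmt16_general n ι U hU hUC hcover a ha u₀ m₀ hm₀ hst ρ hρtr
end
end

section
/- For the observable O(θ) = (cos(θ/2) X + sin(θ/2) Z)^{⊗n} on n qubits, the squared stabilizer norm of its traceless part O_0 = O satisfies D(O)² = (|cos(θ/2)| + |sin(θ/2)|)^{2n} = (1 + |sin θ|)^n, where D(A) = 2^{-n} Σ_{P ∈ P_n} |tr(P A)|. -/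
open Matrix Finset

noncomputable section

/-- The stabilizer norm `D(A) = 2^{-n} Σ_{P ∈ P_n} |tr(P A)|`, summing over all
`4^n` Pauli strings. -/
def DStab (n : ℕ) (A : Matrix (Bits n) (Bits n) ℂ) : ℝ :=
  ((2 : ℝ) ^ n)⁻¹ * ∑ a : Fin n → Fin 4, ‖Matrix.trace (PString n a * A)‖

/-- Trace of a product of two tensor-product matrices factorizes. -/
lemma trace_kron (n : ℕ) (A B : Fin n → Matrix (Fin 2) (Fin 2) ℂ) :
    Matrix.trace ((Matrix.of fun x y : Bits n => ∏ k, A k (x k) (y k)) *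
      (Matrix.of fun x y : Bits n => ∏ k, B k (x k) (y k))) =
    ∏ k, Matrix.trace (A k * B k) := by
  have h1 : ∀ k, Matrix.trace (A k * B k) = ∑ p : Fin 2 × Fin 2, A k p.1 p.2 * B k p.2 p.1 := by
    intro k
    rw [Fintype.sum_prod_type]
    simp [Matrix.trace, Matrix.diag, Matrix.mul_apply]
  simp only [h1]
  rw [Fintype.prod_sum (fun k (p : Fin 2 × Fin 2) => A k p.1 p.2 * B k p.2 p.1)]
  simp only [Matrix.trace, Matrix.diag, Matrix.mul_apply, Matrix.of_apply]
  rw [Finset.sum_comm]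
  rw [← Fintype.sum_prod_type']
  apply Fintype.sum_equiv ((Equiv.prodComm (Bits n) (Bits n)).trans (Equiv.arrowProdEquivProdArrow (Fin n) (fun _ => Fin 2) (fun _ => Fin 2)).symm)
  intro g
  simp [Finset.prod_mul_distrib, Equiv.arrowProdEquivProdArrow, mul_comm]

/-- for `O(θ) = (cos(θ/2) X + sin(θ/2) Z)^{⊗n}` (which is traceless, so
`O_0 = O`), the squared stabilizer norm is
`D(O)² = (|cos(θ/2)| + |sin(θ/2)|)^{2n} = (1 + |sin θ|)^n`. -/
theorem stmt17 (n : ℕ) (θ : ℝ)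
    (O : Matrix (Bits n) (Bits n) ℂ)
    (hO : O = Matrix.of fun x y =>
      ∏ k, (((Real.cos (θ / 2) : ℂ)) • PX + ((Real.sin (θ / 2) : ℂ)) • PZ) (x k) (y k)) :
    DStab n O ^ 2 = (|Real.cos (θ / 2)| + |Real.sin (θ / 2)|) ^ (2 * n) ∧
      DStab n O ^ 2 = (1 + |Real.sin θ|) ^ n := by
  set c := Real.cos (θ / 2) with hc
  set s := Real.sin (θ / 2) with hs
  set M : Matrix (Fin 2) (Fin 2) ℂ := ((c : ℂ)) • PX + ((s : ℂ)) • PZ with hM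
  -- single-qubit traces
  have ht : ∀ j : Fin 4, ‖Matrix.trace (P1 j * M)‖ =
      ![0, 2 * |c|, 0, 2 * |s|] j := by
    intro j
    fin_cases j <;>
      simp [hM, P1, PX, PZ, Matrix.trace, Matrix.diag, Matrix.mul_apply, Fin.sum_univ_two,
        Matrix.smul_apply, Matrix.add_apply, ← Complex.ofReal_mul, abs_mul] <;>
      ring_nf <;>
      simp [← Complex.ofReal_mul, Complex.norm_real, Real.norm_eq_abs, abs_mul]
  have key : DStab n O = (|c| + |s|) ^ n := by
    unfold DStab
    have htr : ∀ a : Fin n → Fin 4,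
        Matrix.trace (PString n a * O) = ∏ k, Matrix.trace (P1 (a k) * M) := by
      intro a
      rw [hO]
      exact trace_kron n (fun k => P1 (a k)) (fun _ => M)
    have : ∑ a : Fin n → Fin 4, ‖Matrix.trace (PString n a * O)‖ =
        ∑ a : Fin n → Fin 4, ∏ k, (![0, 2 * |c|, 0, 2 * |s|] (a k) : ℝ) := by
      refine Finset.sum_congr rfl fun a _ => ?_
      rw [htr a, norm_prod]
      exact Finset.prod_congr rfl fun k _ => ht (a k)
    rw [this, ← Fintype.prod_sum (fun (_ : Fin n) (j : Fin 4) => (![0, 2 * |c|, 0, 2 * |s|] j : ℝ))]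
    have h4 : ∑ j : Fin 4, (![0, 2 * |c|, 0, 2 * |s|] j : ℝ) = 2 * (|c| + |s|) := by
      simp [Fin.sum_univ_four]; ring
    rw [h4]
    rw [Finset.prod_const, Finset.card_univ, Fintype.card_fin, mul_pow]
    field_simp
  have h2 : (|c| + |s|) ^ 2 = 1 + |Real.sin θ| := by
    have hsin : Real.sin θ = 2 * s * c := by
      rw [hs, hc, ← Real.sin_two_mul]
      ring_nf
    rw [hsin, add_sq]
    rw [sq_abs, sq_abs, abs_mul, abs_mul]
    have : c ^ 2 + s ^ 2 = 1 := by
      rw [hc, hs]; exact Real.cos_sq_add_sin_sq _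
    rw [abs_two]
    linear_combination this
  constructor
  · rw [key, ← pow_mul, mul_comm n 2]
  · rw [key, ← pow_mul, mul_comm n 2, pow_mul, h2]
end
end
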